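/- arXiv:2503.11606 — 4 statements merged into one kernel-verified Lean document; each statement's English description precedes it below -/
import Mathlib

section
/- Let Q' and Q'' be finite quivers with path algebras A_{Q'} and A_{Q''} over a field k. Then A_{Q'⊗Q''}/I ≅ A_{Q'} ⊗_k A_{Q''} as k-algebras, where I is the two-sided ideal of the path algebra of the tensor quiver generated by all differences (hα,β)(α,tβ) − (α,hβ)(tα,β) for α ∈ Q'_1, β ∈ Q''_1. -/
open scoped TensorProduct

/-- A finite quiver. -/
structure FinQuiver where
  V : Type
  E : Type
  [fintypeV : Fintype V]
  [fintypeE : Fintype E]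
  [decV : DecidableEq V]
  h : E → V
  t : E → V

attribute [instance] FinQuiver.fintypeV FinQuiver.fintypeE FinQuiver.decV

/-- The tensor quiver `Q' ⊗ Q''`. -/
def FinQuiver.tensor (Q' Q'' : FinQuiver) : FinQuiver where
  V := Q'.V × Q''.V
  E := (Q'.E × Q''.V) ⊕ (Q'.V × Q''.E)
  h := fun e => match e with
    | .inl (a, j) => (Q'.h a, j)
    | .inr (i, b) => (i, Q''.h b)
  t := fun e => match e with
    | .inl (a, j) => (Q'.t a, j)
    | .inr (i, b) => (i, Q''.t b)

variable (k : Type) [Field k]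

/-- The defining relations of the path algebra of a quiver `Q` as a quotient of the
free algebra on the set of vertices and edges: trivial paths are orthogonal idempotents
summing to `1`, and each edge is absorbed by the trivial paths at its head and tail. -/
inductive PathRel (Q : FinQuiver) :
    FreeAlgebra k (Q.V ⊕ Q.E) → FreeAlgebra k (Q.V ⊕ Q.E) → Prop
  | vertex_mul (i j : Q.V) :
      PathRel Q (FreeAlgebra.ι k (Sum.inl i) * FreeAlgebra.ι k (Sum.inl j))
        (if i = j then FreeAlgebra.ι k (Sum.inl i) else 0)
  | sum_one :
      PathRel Q (∑ i : Q.V, FreeAlgebra.ι k (Sum.inl i)) 1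
  | head_absorb (a : Q.E) :
      PathRel Q (FreeAlgebra.ι k (Sum.inl (Q.h a)) * FreeAlgebra.ι k (Sum.inr a))
        (FreeAlgebra.ι k (Sum.inr a))
  | tail_absorb (a : Q.E) :
      PathRel Q (FreeAlgebra.ι k (Sum.inr a) * FreeAlgebra.ι k (Sum.inl (Q.t a)))
        (FreeAlgebra.ι k (Sum.inr a))

/-- The path algebra of a finite quiver `Q` over `k`. -/
abbrev PathAlg (Q : FinQuiver) := RingQuot (PathRel k Q)

/-- The image in the path algebra of the edge `a`. -/
noncomputable def edgeElem (Q : FinQuiver) (a : Q.E) : PathAlg k Q :=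
  RingQuot.mkAlgHom k (PathRel k Q) (FreeAlgebra.ι k (Sum.inr a))



section Herschend

variable {k}

/-- Image of a trivial path in the path algebra. -/
noncomputable def vtxElem (Q : FinQuiver) (i : Q.V) : PathAlg k Q :=
  RingQuot.mkAlgHom k (PathRel k Q) (FreeAlgebra.ι k (Sum.inl i))

lemma vtx_mul_vtx (Q : FinQuiver) (i j : Q.V) :
    vtxElem (k := k) Q i * vtxElem Q j = if i = j then vtxElem Q i else 0 := by
  have := RingQuot.mkAlgHom_rel k (PathRel.vertex_mul (k := k) (Q := Q) i j)
  rw [map_mul] at this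
  rw [vtxElem, vtxElem, this]
  split <;> simp [vtxElem]

lemma sum_vtx (Q : FinQuiver) : (∑ i : Q.V, vtxElem (k := k) Q i) = 1 := by
  have := RingQuot.mkAlgHom_rel k (PathRel.sum_one (k := k) (Q := Q))
  rw [map_sum, map_one] at this
  simpa [vtxElem] using this

lemma vtx_mul_edge (Q : FinQuiver) (a : Q.E) :
    vtxElem (k := k) Q (Q.h a) * edgeElem k Q a = edgeElem k Q a := by
  have := RingQuot.mkAlgHom_rel k (PathRel.head_absorb (k := k) (Q := Q) a)
  rw [map_mul] at this
  exact this

lemma edge_mul_vtx (Q : FinQuiver) (a : Q.E) :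
    edgeElem k Q a * vtxElem (k := k) Q (Q.t a) = edgeElem k Q a := by
  have := RingQuot.mkAlgHom_rel k (PathRel.tail_absorb (k := k) (Q := Q) a)
  rw [map_mul] at this
  exact this

lemma vtx_mul_edge' (Q : FinQuiver) (v : Q.V) (a : Q.E) :
    vtxElem (k := k) Q v * edgeElem k Q a = if v = Q.h a then edgeElem k Q a else 0 := by
  conv_lhs => rw [← vtx_mul_edge Q a, ← mul_assoc, vtx_mul_vtx]
  split
  · next h => rw [h]; exact vtx_mul_edge Q a
  · simp

lemma edge_mul_vtx' (Q : FinQuiver) (a : Q.E) (v : Q.V) :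
    edgeElem k Q a * vtxElem (k := k) Q v = if Q.t a = v then edgeElem k Q a else 0 := by
  conv_lhs => rw [← edge_mul_vtx Q a, mul_assoc, vtx_mul_vtx]
  split
  · exact edge_mul_vtx Q a
  · simp

lemma edge_mul_edge_of_ne (Q : FinQuiver) (a b : Q.E) (hab : Q.t a ≠ Q.h b) :
    edgeElem k Q a * edgeElem k Q b = 0 := by
  rw [← vtx_mul_edge Q b, ← mul_assoc, edge_mul_vtx', if_neg hab, zero_mul]

end Herschend
section Herschend2

variable {k}
variable (Q' Q'' : FinQuiver)

@[simp] lemma tensor_h_inl (a : Q'.E) (j : Q''.V) :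
    (Q'.tensor Q'').h (Sum.inl (a, j)) = (Q'.h a, j) := rfl
@[simp] lemma tensor_h_inr (i : Q'.V) (b : Q''.E) :
    (Q'.tensor Q'').h (Sum.inr (i, b)) = (i, Q''.h b) := rfl
@[simp] lemma tensor_t_inl (a : Q'.E) (j : Q''.V) :
    (Q'.tensor Q'').t (Sum.inl (a, j)) = (Q'.t a, j) := rfl
@[simp] lemma tensor_t_inr (i : Q'.V) (b : Q''.E) :
    (Q'.tensor Q'').t (Sum.inr (i, b)) = (i, Q''.t b) := rfl

@[simp] lemma tensorV_mk_eq (i i' : Q'.V) (j j' : Q''.V) :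
    (((i, j) : (Q'.tensor Q'').V) = ((i', j') : (Q'.tensor Q'').V)) ↔ i = i' ∧ j = j' :=
  Iff.of_eq (Prod.mk.injEq i j i' j')

lemma vtxT_mul_vtxT (i i' : Q'.V) (j j' : Q''.V) :
    vtxElem (k := k) (Q'.tensor Q'') (i, j) * vtxElem (Q'.tensor Q'') (i', j') =
      if i = i' ∧ j = j' then vtxElem (Q'.tensor Q'') (i, j) else 0 := by
  refine (vtx_mul_vtx (Q'.tensor Q'') _ _).trans ?_
  congr 1
  exact propext (tensorV_mk_eq Q' Q'' i i' j j')

lemma vtxT_mul_edgeL (i : Q'.V) (j : Q''.V) (a : Q'.E) (j' : Q''.V) :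
    vtxElem (k := k) (Q'.tensor Q'') (i, j) * edgeElem k (Q'.tensor Q'') (Sum.inl (a, j')) =
      if i = Q'.h a ∧ j = j' then edgeElem k (Q'.tensor Q'') (Sum.inl (a, j')) else 0 := by
  refine (vtx_mul_edge' (Q'.tensor Q'') _ _).trans ?_
  congr 1
  exact propext (tensorV_mk_eq Q' Q'' i (Q'.h a) j j')

lemma vtxT_mul_edgeR (i : Q'.V) (j : Q''.V) (i' : Q'.V) (b : Q''.E) :
    vtxElem (k := k) (Q'.tensor Q'') (i, j) * edgeElem k (Q'.tensor Q'') (Sum.inr (i', b)) =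
      if i = i' ∧ j = Q''.h b then edgeElem k (Q'.tensor Q'') (Sum.inr (i', b)) else 0 := by
  refine (vtx_mul_edge' (Q'.tensor Q'') _ _).trans ?_
  congr 1
  exact propext (tensorV_mk_eq Q' Q'' i i' j (Q''.h b))

lemma edgeL_mul_vtxT (a : Q'.E) (j' : Q''.V) (i : Q'.V) (j : Q''.V) :
    edgeElem k (Q'.tensor Q'') (Sum.inl (a, j')) * vtxElem (k := k) (Q'.tensor Q'') (i, j) =
      if Q'.t a = i ∧ j' = j then edgeElem k (Q'.tensor Q'') (Sum.inl (a, j')) else 0 := by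
  refine (edge_mul_vtx' (Q'.tensor Q'') _ _).trans ?_
  congr 1
  exact propext (tensorV_mk_eq Q' Q'' (Q'.t a) i j' j)

lemma edgeR_mul_vtxT (i' : Q'.V) (b : Q''.E) (i : Q'.V) (j : Q''.V) :
    edgeElem k (Q'.tensor Q'') (Sum.inr (i', b)) * vtxElem (k := k) (Q'.tensor Q'') (i, j) =
      if i' = i ∧ Q''.t b = j then edgeElem k (Q'.tensor Q'') (Sum.inr (i', b)) else 0 := by
  refine (edge_mul_vtx' (Q'.tensor Q'') _ _).trans ?_
  congr 1
  exact propext (tensorV_mk_eq Q' Q'' i' i (Q''.t b) j)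

/-- sum of vertex idempotents in row `i`. -/
noncomputable def sV' (i : Q'.V) : PathAlg k (Q'.tensor Q'') :=
  ∑ j : Q''.V, vtxElem (Q'.tensor Q'') (i, j)

noncomputable def sV'' (j : Q''.V) : PathAlg k (Q'.tensor Q'') :=
  ∑ i : Q'.V, vtxElem (Q'.tensor Q'') (i, j)

noncomputable def sE' (a : Q'.E) : PathAlg k (Q'.tensor Q'') :=
  ∑ j : Q''.V, edgeElem k (Q'.tensor Q'') (Sum.inl (a, j))

noncomputable def sE'' (b : Q''.E) : PathAlg k (Q'.tensor Q'') :=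
  ∑ i : Q'.V, edgeElem k (Q'.tensor Q'') (Sum.inr (i, b))

lemma sV'_mul_sV' (i i' : Q'.V) :
    sV' (k := k) Q' Q'' i * sV' Q' Q'' i' = if i = i' then sV' Q' Q'' i else 0 := by
  rw [sV', sV', Finset.sum_mul_sum]
  simp only [vtx_mul_vtx, vtxT_mul_vtxT, tensorV_mk_eq Q' Q'', ite_and]
  by_cases h : i = i'
  · subst h; simp [sV', Finset.sum_ite_eq]
  · simp [h]

lemma sV''_mul_sV'' (j j' : Q''.V) :
    sV'' (k := k) Q' Q'' j * sV'' Q' Q'' j' = if j = j' then sV'' Q' Q'' j else 0 := by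
  rw [sV'', sV'', Finset.sum_mul_sum]
  simp only [vtx_mul_vtx, vtxT_mul_vtxT, tensorV_mk_eq Q' Q'', ite_and]
  by_cases h : j = j'
  · subst h; simp [sV'', Finset.sum_ite_eq]
  · simp [h]

lemma sum_sV' : (∑ i : Q'.V, sV' (k := k) Q' Q'' i) = 1 := by
  rw [← sum_vtx (k := k) (Q'.tensor Q'')]
  rw [show (∑ p : (Q'.tensor Q'').V, vtxElem (k := k) (Q'.tensor Q'') p)
      = ∑ p : Q'.V × Q''.V, vtxElem (k := k) (Q'.tensor Q'') p from rfl]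
  exact (Fintype.sum_prod_type _).symm

lemma sum_sV'' : (∑ j : Q''.V, sV'' (k := k) Q' Q'' j) = 1 := by
  rw [← sum_vtx (k := k) (Q'.tensor Q'')]
  rw [show (∑ p : (Q'.tensor Q'').V, vtxElem (k := k) (Q'.tensor Q'') p)
      = ∑ p : Q'.V × Q''.V, vtxElem (k := k) (Q'.tensor Q'') p from rfl]
  exact (Fintype.sum_prod_type_right _).symm

lemma sV'_head (a : Q'.E) :
    sV' (k := k) Q' Q'' (Q'.h a) * sE' Q' Q'' a = sE' Q' Q'' a := by
  rw [sV', sE', Finset.sum_mul_sum]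
  simp [vtx_mul_edge', vtxT_mul_edgeL, vtxT_mul_edgeR, tensorV_mk_eq Q' Q'', ite_and, sE']

lemma sE'_tail (a : Q'.E) :
    sE' (k := k) Q' Q'' a * sV' Q' Q'' (Q'.t a) = sE' Q' Q'' a := by
  rw [sV', sE', Finset.sum_mul_sum]
  simp [edge_mul_vtx', edgeL_mul_vtxT, edgeR_mul_vtxT, tensorV_mk_eq Q' Q'', ite_and, sE']

lemma sV''_head (b : Q''.E) :
    sV'' (k := k) Q' Q'' (Q''.h b) * sE'' Q' Q'' b = sE'' Q' Q'' b := by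
  rw [sV'', sE'', Finset.sum_mul_sum]
  simp [vtx_mul_edge', vtxT_mul_edgeL, vtxT_mul_edgeR, tensorV_mk_eq Q' Q'', ite_and, sE'']

lemma sE''_tail (b : Q''.E) :
    sE'' (k := k) Q' Q'' b * sV'' Q' Q'' (Q''.t b) = sE'' Q' Q'' b := by
  rw [sV'', sE'', Finset.sum_mul_sum]
  simp [edge_mul_vtx', edgeL_mul_vtxT, edgeR_mul_vtxT, tensorV_mk_eq Q' Q'', ite_and, sE'']

end Herschend2
section Herschend3

variable {k}
variable (Q' Q'' : FinQuiver)

lemma sV'_mul_sV'' (i : Q'.V) (j : Q''.V) :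
    sV' (k := k) Q' Q'' i * sV'' Q' Q'' j = vtxElem (Q'.tensor Q'') (i, j) := by
  rw [sV', sV'', Finset.sum_mul_sum]
  simp [vtx_mul_vtx, vtxT_mul_vtxT, tensorV_mk_eq Q' Q'', ite_and]

lemma sV''_mul_sV' (j : Q''.V) (i : Q'.V) :
    sV'' (k := k) Q' Q'' j * sV' Q' Q'' i = vtxElem (Q'.tensor Q'') (i, j) := by
  rw [sV', sV'', Finset.sum_mul_sum]
  simp [vtx_mul_vtx, vtxT_mul_vtxT, tensorV_mk_eq Q' Q'', ite_and]

lemma sV'_mul_sE'' (i : Q'.V) (b : Q''.E) :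
    sV' (k := k) Q' Q'' i * sE'' Q' Q'' b = edgeElem k (Q'.tensor Q'') (Sum.inr (i, b)) := by
  rw [sV', sE'', Finset.sum_mul_sum]
  simp [vtx_mul_edge', vtxT_mul_edgeL, vtxT_mul_edgeR, tensorV_mk_eq Q' Q'', ite_and]

lemma sE''_mul_sV' (b : Q''.E) (i : Q'.V) :
    sE'' (k := k) Q' Q'' b * sV' Q' Q'' i = edgeElem k (Q'.tensor Q'') (Sum.inr (i, b)) := by
  rw [sV', sE'', Finset.sum_mul_sum]
  simp [edge_mul_vtx', edgeL_mul_vtxT, edgeR_mul_vtxT, tensorV_mk_eq Q' Q'', ite_and]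

lemma sE'_mul_sV'' (a : Q'.E) (j : Q''.V) :
    sE' (k := k) Q' Q'' a * sV'' Q' Q'' j = edgeElem k (Q'.tensor Q'') (Sum.inl (a, j)) := by
  rw [sV'', sE', Finset.sum_mul_sum]
  simp [edge_mul_vtx', edgeL_mul_vtxT, edgeR_mul_vtxT, tensorV_mk_eq Q' Q'', ite_and]

lemma sV''_mul_sE' (j : Q''.V) (a : Q'.E) :
    sV'' (k := k) Q' Q'' j * sE' Q' Q'' a = edgeElem k (Q'.tensor Q'') (Sum.inl (a, j)) := by
  rw [sV'', sE', Finset.sum_mul_sum]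
  simp [vtx_mul_edge', vtxT_mul_edgeL, vtxT_mul_edgeR, tensorV_mk_eq Q' Q'', ite_and]

lemma sE'_mul_sE'' (a : Q'.E) (b : Q''.E) :
    sE' (k := k) Q' Q'' a * sE'' Q' Q'' b =
      edgeElem k (Q'.tensor Q'') (Sum.inl (a, Q''.h b)) *
        edgeElem k (Q'.tensor Q'') (Sum.inr (Q'.t a, b)) := by
  rw [sE', sE'', Finset.sum_mul_sum]
  have key : ∀ (j : Q''.V) (i : Q'.V),
      edgeElem k (Q'.tensor Q'') (Sum.inl (a, j)) * edgeElem k (Q'.tensor Q'') (Sum.inr (i, b)) =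
      if j = Q''.h b ∧ i = Q'.t a then
        edgeElem k (Q'.tensor Q'') (Sum.inl (a, Q''.h b)) *
          edgeElem k (Q'.tensor Q'') (Sum.inr (Q'.t a, b)) else 0 := by
    intro j i
    split
    · next hc => rw [hc.1, hc.2]
    · next hc =>
        refine edge_mul_edge_of_ne _ _ _ ?_
        intro h
        rw [tensor_t_inl, tensor_h_inr] at h
        have h' : ((Q'.t a, j) : Q'.V × Q''.V) = (i, Q''.h b) := h
        rw [Prod.mk.injEq] at h'
        exact hc ⟨h'.2, h'.1.symm⟩
  have hsum : (∑ j : Q''.V, ∑ i : Q'.V,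
      edgeElem k (Q'.tensor Q'') (Sum.inl (a, j)) * edgeElem k (Q'.tensor Q'') (Sum.inr (i, b))) =
      ∑ j : Q''.V, ∑ i : Q'.V,
      if j = Q''.h b ∧ i = Q'.t a then
        edgeElem k (Q'.tensor Q'') (Sum.inl (a, Q''.h b)) *
          edgeElem k (Q'.tensor Q'') (Sum.inr (Q'.t a, b)) else 0 :=
    Finset.sum_congr rfl fun j _ => Finset.sum_congr rfl fun i _ => key j i
  rw [hsum]
  simp [ite_and]

lemma sE''_mul_sE' (b : Q''.E) (a : Q'.E) :
    sE'' (k := k) Q' Q'' b * sE' Q' Q'' a =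
      edgeElem k (Q'.tensor Q'') (Sum.inr (Q'.h a, b)) *
        edgeElem k (Q'.tensor Q'') (Sum.inl (a, Q''.t b)) := by
  rw [sE', sE'', Finset.sum_mul_sum]
  have key : ∀ (i : Q'.V) (j : Q''.V),
      edgeElem k (Q'.tensor Q'') (Sum.inr (i, b)) * edgeElem k (Q'.tensor Q'') (Sum.inl (a, j)) =
      if i = Q'.h a ∧ j = Q''.t b then
        edgeElem k (Q'.tensor Q'') (Sum.inr (Q'.h a, b)) *
          edgeElem k (Q'.tensor Q'') (Sum.inl (a, Q''.t b)) else 0 := by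
    intro i j
    split
    · next hc => rw [hc.1, hc.2]
    · next hc =>
        refine edge_mul_edge_of_ne _ _ _ ?_
        intro h
        rw [tensor_t_inr, tensor_h_inl] at h
        have h' : ((i, Q''.t b) : Q'.V × Q''.V) = (Q'.h a, j) := h
        rw [Prod.mk.injEq] at h'
        exact hc ⟨h'.1, h'.2.symm⟩
  have hsum : (∑ i : Q'.V, ∑ j : Q''.V,
      edgeElem k (Q'.tensor Q'') (Sum.inr (i, b)) * edgeElem k (Q'.tensor Q'') (Sum.inl (a, j))) =
      ∑ i : Q'.V, ∑ j : Q''.V,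
      if i = Q'.h a ∧ j = Q''.t b then
        edgeElem k (Q'.tensor Q'') (Sum.inr (Q'.h a, b)) *
          edgeElem k (Q'.tensor Q'') (Sum.inl (a, Q''.t b)) else 0 :=
    Finset.sum_congr rfl fun i _ => Finset.sum_congr rfl fun j _ => key i j
  rw [hsum]
  simp [ite_and]

end Herschend3
section Herschend4

variable {k}
variable (Q' Q'' : FinQuiver)

noncomputable def fGen : Q'.V ⊕ Q'.E → PathAlg k (Q'.tensor Q'')
  | Sum.inl i => sV' Q' Q'' i
  | Sum.inr a => sE' Q' Q'' a

noncomputable def gGen : Q''.V ⊕ Q''.E → PathAlg k (Q'.tensor Q'')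
  | Sum.inl j => sV'' Q' Q'' j
  | Sum.inr b => sE'' Q' Q'' b

lemma fRel : ∀ ⦃x y⦄, PathRel k Q' x y →
    FreeAlgebra.lift k (fGen (k := k) Q' Q'') x = FreeAlgebra.lift k (fGen (k := k) Q' Q'') y := by
  intro x y hxy
  induction hxy with
  | vertex_mul i j =>
      by_cases h : i = j
      · subst h
        rw [if_pos rfl, map_mul]
        simp only [FreeAlgebra.lift_ι_apply, fGen]
        have := sV'_mul_sV' (k := k) Q' Q'' i i
        rwa [if_pos rfl] at this
      · rw [if_neg h, map_mul, map_zero]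
        simp only [FreeAlgebra.lift_ι_apply, fGen]
        have := sV'_mul_sV' (k := k) Q' Q'' i j
        rwa [if_neg h] at this
  | sum_one =>
      simp only [map_sum, map_one, FreeAlgebra.lift_ι_apply, fGen]
      exact sum_sV' Q' Q''
  | head_absorb a =>
      simp only [map_mul, FreeAlgebra.lift_ι_apply, fGen]
      exact sV'_head Q' Q'' a
  | tail_absorb a =>
      simp only [map_mul, FreeAlgebra.lift_ι_apply, fGen]
      exact sE'_tail Q' Q'' a

lemma gRel : ∀ ⦃x y⦄, PathRel k Q'' x y →
    FreeAlgebra.lift k (gGen (k := k) Q' Q'') x = FreeAlgebra.lift k (gGen (k := k) Q' Q'') y := by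
  intro x y hxy
  induction hxy with
  | vertex_mul i j =>
      by_cases h : i = j
      · subst h
        rw [if_pos rfl, map_mul]
        simp only [FreeAlgebra.lift_ι_apply, gGen]
        have := sV''_mul_sV'' (k := k) Q' Q'' i i
        rwa [if_pos rfl] at this
      · rw [if_neg h, map_mul, map_zero]
        simp only [FreeAlgebra.lift_ι_apply, gGen]
        have := sV''_mul_sV'' (k := k) Q' Q'' i j
        rwa [if_neg h] at this
  | sum_one =>
      simp only [map_sum, map_one, FreeAlgebra.lift_ι_apply, gGen]
      exact sum_sV'' Q' Q''
  | head_absorb b =>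
      simp only [map_mul, FreeAlgebra.lift_ι_apply, gGen]
      exact sV''_head Q' Q'' b
  | tail_absorb b =>
      simp only [map_mul, FreeAlgebra.lift_ι_apply, gGen]
      exact sE''_tail Q' Q'' b

noncomputable def Fhom : PathAlg k Q' →ₐ[k] PathAlg k (Q'.tensor Q'') :=
  RingQuot.liftAlgHom k ⟨FreeAlgebra.lift k (fGen (k := k) Q' Q''), fRel (k := k) Q' Q''⟩

noncomputable def Ghom : PathAlg k Q'' →ₐ[k] PathAlg k (Q'.tensor Q'') :=
  RingQuot.liftAlgHom k ⟨FreeAlgebra.lift k (gGen (k := k) Q' Q''), gRel (k := k) Q' Q''⟩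

@[simp] lemma Fhom_vtx (i : Q'.V) :
    Fhom (k := k) Q' Q'' (vtxElem Q' i) = sV' Q' Q'' i := by
  rw [Fhom, vtxElem, RingQuot.liftAlgHom_mkAlgHom_apply, FreeAlgebra.lift_ι_apply]; rfl

@[simp] lemma Fhom_edge (a : Q'.E) :
    Fhom (k := k) Q' Q'' (edgeElem k Q' a) = sE' Q' Q'' a := by
  rw [Fhom, edgeElem, RingQuot.liftAlgHom_mkAlgHom_apply, FreeAlgebra.lift_ι_apply]; rfl

@[simp] lemma Ghom_vtx (j : Q''.V) :
    Ghom (k := k) Q' Q'' (vtxElem Q'' j) = sV'' Q' Q'' j := by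
  rw [Ghom, vtxElem, RingQuot.liftAlgHom_mkAlgHom_apply, FreeAlgebra.lift_ι_apply]; rfl

@[simp] lemma Ghom_edge (b : Q''.E) :
    Ghom (k := k) Q' Q'' (edgeElem k Q'' b) = sE'' Q' Q'' b := by
  rw [Ghom, edgeElem, RingQuot.liftAlgHom_mkAlgHom_apply, FreeAlgebra.lift_ι_apply]; rfl

end Herschend4

section Quot

variable {k}
variable {R S : Type} [Ring R] [Ring S] [Algebra k R] [Algebra k S]

/-- The quotient map as an `AlgHom`. -/
noncomputable def quotAlgHom (I : TwoSidedIdeal R) : R →ₐ[k] I.ringCon.Quotient :=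
  { I.ringCon.mk' with commutes' := fun _ => rfl }

lemma quotAlgHom_surjective (I : TwoSidedIdeal R) :
    Function.Surjective (quotAlgHom (k := k) I) :=
  Quotient.mk''_surjective

lemma quotAlgHom_eq_of_sub_mem (I : TwoSidedIdeal R) {x y : R} (h : x - y ∈ I) :
    quotAlgHom (k := k) I x = quotAlgHom (k := k) I y :=
  Quotient.sound' ((I.rel_iff x y).mpr h)

/-- Lift an `AlgHom` killing `I` to the quotient. -/
noncomputable def quotLift (I : TwoSidedIdeal R) (f : R →ₐ[k] S)
    (hf : ∀ x ∈ I, f x = 0) : I.ringCon.Quotient →ₐ[k] S where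
  toFun := Quotient.lift f (fun x y hxy => by
    have hxy' : x - y ∈ I := (I.rel_iff x y).mp hxy
    have := hf _ hxy'
    rw [map_sub, sub_eq_zero] at this
    exact this)
  map_one' := map_one f
  map_mul' := Quotient.ind₂' fun a b => map_mul f a b
  map_zero' := map_zero f
  map_add' := Quotient.ind₂' fun a b => map_add f a b
  commutes' := fun r => f.commutes r

@[simp] lemma quotLift_quotAlgHom (I : TwoSidedIdeal R) (f : R →ₐ[k] S)
    (hf : ∀ x ∈ I, f x = 0) (x : R) :
    quotLift I f hf (quotAlgHom (k := k) I x) = f x := rfl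

end Quot
section Herschend5

variable {k}
variable (Q' Q'' : FinQuiver)

noncomputable def phiGen : ((Q'.tensor Q'').V ⊕ (Q'.tensor Q'').E) →
    (PathAlg k Q' ⊗[k] PathAlg k Q'')
  | Sum.inl (i, j) => vtxElem Q' i ⊗ₜ[k] vtxElem Q'' j
  | Sum.inr (Sum.inl (a, j)) => edgeElem k Q' a ⊗ₜ[k] vtxElem Q'' j
  | Sum.inr (Sum.inr (i, b)) => vtxElem Q' i ⊗ₜ[k] edgeElem k Q'' b

@[simp] lemma phiGen_inl (i : Q'.V) (j : Q''.V) :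
    phiGen (k := k) Q' Q'' (Sum.inl (i, j)) = vtxElem Q' i ⊗ₜ[k] vtxElem Q'' j := rfl
@[simp] lemma phiGen_inrl (a : Q'.E) (j : Q''.V) :
    phiGen (k := k) Q' Q'' (Sum.inr (Sum.inl (a, j))) = edgeElem k Q' a ⊗ₜ[k] vtxElem Q'' j := rfl
@[simp] lemma phiGen_inrr (i : Q'.V) (b : Q''.E) :
    phiGen (k := k) Q' Q'' (Sum.inr (Sum.inr (i, b))) = vtxElem Q' i ⊗ₜ[k] edgeElem k Q'' b := rfl

set_option maxHeartbeats 1000000 in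
lemma phiRel : ∀ ⦃x y⦄, PathRel k (Q'.tensor Q'') x y →
    FreeAlgebra.lift k (phiGen (k := k) Q' Q'') x
      = FreeAlgebra.lift k (phiGen (k := k) Q' Q'') y := by
  intro x y hxy
  induction hxy with
  | vertex_mul p q =>
      obtain ⟨i, j⟩ := p
      obtain ⟨i', j'⟩ := q
      simp only [map_mul, FreeAlgebra.lift_ι_apply, phiGen_inl,
        Algebra.TensorProduct.tmul_mul_tmul, vtx_mul_vtx]
      by_cases hc : ((i, j) : (Q'.tensor Q'').V) = (i', j')
      · refine Eq.trans ?_ (congrArg (FreeAlgebra.lift k (phiGen (k := k) Q' Q'')) (if_pos hc)).symm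
        obtain ⟨rfl, rfl⟩ := (tensorV_mk_eq Q' Q'' i i' j j').mp hc
        simp [FreeAlgebra.lift_ι_apply, phiGen_inl]
      · refine Eq.trans ?_ (congrArg (FreeAlgebra.lift k (phiGen (k := k) Q' Q'')) (if_neg hc)).symm
        have h' := mt (tensorV_mk_eq Q' Q'' i i' j j').mpr hc
        by_cases h1 : i = i' <;> by_cases h2 : j = j' <;>
          simp_all [TensorProduct.zero_tmul, TensorProduct.tmul_zero]
  | sum_one =>
      simp only [map_sum, FreeAlgebra.lift_ι_apply]
      rw [show (∑ p : (Q'.tensor Q'').V, phiGen (k := k) Q' Q'' (Sum.inl p))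
          = ∑ p : Q'.V × Q''.V, phiGen (k := k) Q' Q'' (Sum.inl p) from rfl]
      rw [Fintype.sum_prod_type]
      simp only [phiGen_inl]
      rw [show (∑ i : Q'.V, ∑ j : Q''.V, vtxElem Q' i ⊗ₜ[k] vtxElem Q'' j)
          = ∑ i : Q'.V, vtxElem Q' i ⊗ₜ[k] (∑ j : Q''.V, vtxElem Q'' j) by
        refine Finset.sum_congr rfl fun i _ => ?_
        rw [TensorProduct.tmul_sum]]
      rw [← TensorProduct.sum_tmul, sum_vtx, sum_vtx, map_one, Algebra.TensorProduct.one_def]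
  | head_absorb e =>
      obtain (⟨a, j⟩ | ⟨i, b⟩) := e <;>
      simp [FreeAlgebra.lift_ι_apply, tensor_h_inl, tensor_h_inr,
        phiGen_inl, phiGen_inrl, phiGen_inrr,
        Algebra.TensorProduct.tmul_mul_tmul, vtx_mul_edge, vtx_mul_vtx]
  | tail_absorb e =>
      obtain (⟨a, j⟩ | ⟨i, b⟩) := e <;>
      simp [FreeAlgebra.lift_ι_apply, tensor_t_inl, tensor_t_inr,
        phiGen_inl, phiGen_inrl, phiGen_inrr,
        Algebra.TensorProduct.tmul_mul_tmul, edge_mul_vtx, vtx_mul_vtx]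

noncomputable def phi1 : PathAlg k (Q'.tensor Q'') →ₐ[k] (PathAlg k Q' ⊗[k] PathAlg k Q'') :=
  RingQuot.liftAlgHom k ⟨FreeAlgebra.lift k (phiGen (k := k) Q' Q''), phiRel (k := k) Q' Q''⟩

@[simp] lemma phi1_vtx (i : Q'.V) (j : Q''.V) :
    phi1 Q' Q'' (vtxElem (Q'.tensor Q'') (i, j)) = vtxElem Q' i ⊗ₜ[k] vtxElem Q'' j := by
  rw [phi1, vtxElem]
  erw [RingQuot.liftAlgHom_mkAlgHom_apply, FreeAlgebra.lift_ι_apply]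
  exact phiGen_inl Q' Q'' i j

@[simp] lemma phi1_edge_inl (a : Q'.E) (j : Q''.V) :
    phi1 Q' Q'' (edgeElem k (Q'.tensor Q'') (Sum.inl (a, j)))
      = edgeElem k Q' a ⊗ₜ[k] vtxElem Q'' j := by
  rw [phi1, edgeElem]
  erw [RingQuot.liftAlgHom_mkAlgHom_apply, FreeAlgebra.lift_ι_apply]
  exact phiGen_inrl Q' Q'' a j

@[simp] lemma phi1_edge_inr (i : Q'.V) (b : Q''.E) :
    phi1 Q' Q'' (edgeElem k (Q'.tensor Q'') (Sum.inr (i, b)))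
      = vtxElem Q' i ⊗ₜ[k] edgeElem k Q'' b := by
  rw [phi1, edgeElem]
  erw [RingQuot.liftAlgHom_mkAlgHom_apply, FreeAlgebra.lift_ι_apply]
  exact phiGen_inrr Q' Q'' i b

lemma phi1_sV' (i : Q'.V) :
    phi1 (k := k) Q' Q'' (sV' Q' Q'' i) = vtxElem Q' i ⊗ₜ[k] 1 := by
  rw [sV', map_sum]
  rw [show (∑ j : Q''.V, phi1 (k := k) Q' Q'' (vtxElem (Q'.tensor Q'') (i, j)))
      = ∑ j : Q''.V, vtxElem Q' i ⊗ₜ[k] vtxElem Q'' j from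
    Finset.sum_congr rfl fun j _ => phi1_vtx Q' Q'' i j]
  rw [← TensorProduct.tmul_sum, sum_vtx]

lemma phi1_sV'' (j : Q''.V) :
    phi1 (k := k) Q' Q'' (sV'' Q' Q'' j) = 1 ⊗ₜ[k] vtxElem Q'' j := by
  rw [sV'', map_sum]
  rw [show (∑ i : Q'.V, phi1 (k := k) Q' Q'' (vtxElem (Q'.tensor Q'') (i, j)))
      = ∑ i : Q'.V, vtxElem Q' i ⊗ₜ[k] vtxElem Q'' j from
    Finset.sum_congr rfl fun i _ => phi1_vtx Q' Q'' i j]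
  rw [← TensorProduct.sum_tmul, sum_vtx]

lemma phi1_sE' (a : Q'.E) :
    phi1 (k := k) Q' Q'' (sE' Q' Q'' a) = edgeElem k Q' a ⊗ₜ[k] 1 := by
  rw [sE', map_sum]
  rw [show (∑ j : Q''.V, phi1 (k := k) Q' Q'' (edgeElem k (Q'.tensor Q'') (Sum.inl (a, j))))
      = ∑ j : Q''.V, edgeElem k Q' a ⊗ₜ[k] vtxElem Q'' j from
    Finset.sum_congr rfl fun j _ => phi1_edge_inl Q' Q'' a j]
  rw [← TensorProduct.tmul_sum, sum_vtx]

lemma phi1_sE'' (b : Q''.E) :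
    phi1 (k := k) Q' Q'' (sE'' Q' Q'' b) = 1 ⊗ₜ[k] edgeElem k Q'' b := by
  rw [sE'', map_sum]
  rw [show (∑ i : Q'.V, phi1 (k := k) Q' Q'' (edgeElem k (Q'.tensor Q'') (Sum.inr (i, b))))
      = ∑ i : Q'.V, vtxElem Q' i ⊗ₜ[k] edgeElem k Q'' b from
    Finset.sum_congr rfl fun i _ => phi1_edge_inr Q' Q'' i b]
  rw [← TensorProduct.sum_tmul, sum_vtx]

end Herschend5

set_option maxHeartbeats 2000000 in
/-- Herschend-type isomorphism: the path algebra of the tensor quiver `Q' ⊗ Q''`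
modulo the two-sided ideal `I` generated by all differences
`(hα,β)(α,tβ) − (α,hβ)(tα,β)` (for `α ∈ Q'_1`, `β ∈ Q''_1`) is isomorphic, as a
`k`-algebra, to the tensor product `A_{Q'} ⊗_k A_{Q''}` of the path algebras. -/
theorem pathAlg_tensor_iso (Q' Q'' : FinQuiver)
    (I : TwoSidedIdeal (PathAlg k (Q'.tensor Q'')))
    (hI : I = TwoSidedIdeal.span
      { x | ∃ (α : Q'.E) (β : Q''.E),
          x = edgeElem k (Q'.tensor Q'') (Sum.inr (Q'.h α, β)) *
                edgeElem k (Q'.tensor Q'') (Sum.inl (α, Q''.t β)) -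
              edgeElem k (Q'.tensor Q'') (Sum.inl (α, Q''.h β)) *
                edgeElem k (Q'.tensor Q'') (Sum.inr (Q'.t α, β)) }) :
    Nonempty (I.ringCon.Quotient ≃ₐ[k] (PathAlg k Q' ⊗[k] PathAlg k Q'')) := by
  classical
  -- the downward map
  have hvanish : ∀ x ∈ I, phi1 (k := k) Q' Q'' x = 0 := by
    intro x hx
    rw [hI, TwoSidedIdeal.mem_span_iff] at hx
    refine (TwoSidedIdeal.mem_ker _).mp (hx (TwoSidedIdeal.ker (phi1 (k := k) Q' Q'')) ?_)
    rintro y ⟨α, β, rfl⟩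
    rw [SetLike.mem_coe, TwoSidedIdeal.mem_ker]
    simp only [map_sub, map_mul, phi1_edge_inl, phi1_edge_inr,
      Algebra.TensorProduct.tmul_mul_tmul, vtx_mul_edge, edge_mul_vtx, sub_self]
  -- the two halves of the upward map
  set F : PathAlg k Q' →ₐ[k] I.ringCon.Quotient :=
    (quotAlgHom (k := k) I).comp (Fhom (k := k) Q' Q'') with hF
  set G : PathAlg k Q'' →ₐ[k] I.ringCon.Quotient :=
    (quotAlgHom (k := k) I).comp (Ghom (k := k) Q' Q'') with hG
  have key : ∀ (s : Q'.V ⊕ Q'.E) (t : Q''.V ⊕ Q''.E),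
      Commute (F (RingQuot.mkAlgHom k (PathRel k Q') (FreeAlgebra.ι k s)))
        (G (RingQuot.mkAlgHom k (PathRel k Q'') (FreeAlgebra.ι k t))) := by
    rintro (i | a) (j | b)
    · show F (vtxElem Q' i) * G (vtxElem Q'' j) = G (vtxElem Q'' j) * F (vtxElem Q' i)
      rw [hF, hG]
      simp only [AlgHom.comp_apply, Fhom_vtx, Ghom_vtx, ← map_mul,
        sV'_mul_sV'', sV''_mul_sV']
    · show F (vtxElem Q' i) * G (edgeElem k Q'' b)
        = G (edgeElem k Q'' b) * F (vtxElem Q' i)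
      rw [hF, hG]
      simp only [AlgHom.comp_apply, Fhom_vtx, Ghom_edge, ← map_mul,
        sV'_mul_sE'', sE''_mul_sV']
    · show F (edgeElem k Q' a) * G (vtxElem Q'' j)
        = G (vtxElem Q'' j) * F (edgeElem k Q' a)
      rw [hF, hG]
      simp only [AlgHom.comp_apply, Fhom_edge, Ghom_vtx, ← map_mul,
        sE'_mul_sV'', sV''_mul_sE']
    · show F (edgeElem k Q' a) * G (edgeElem k Q'' b)
        = G (edgeElem k Q'' b) * F (edgeElem k Q' a)
      rw [hF, hG]
      simp only [AlgHom.comp_apply, Fhom_edge, Ghom_edge, ← map_mul,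
        sE'_mul_sE'', sE''_mul_sE']
      refine (quotAlgHom_eq_of_sub_mem I ?_).symm
      rw [hI]
      exact TwoSidedIdeal.subset_span ⟨a, b, rfl⟩
  have hcommGen : ∀ (x : PathAlg k Q') (t : Q''.V ⊕ Q''.E),
      Commute (F x) (G (RingQuot.mkAlgHom k (PathRel k Q'') (FreeAlgebra.ι k t))) := by
    intro x t
    obtain ⟨z, rfl⟩ := RingQuot.mkAlgHom_surjective k (PathRel k Q') x
    induction z using FreeAlgebra.induction with
    | grade0 r => rw [AlgHom.commutes, AlgHom.commutes]; exact Algebra.commutes r _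
    | grade1 s => exact key s t
    | mul a b ha hb => rw [map_mul, map_mul]; exact ha.mul_left hb
    | add a b ha hb => rw [map_add, map_add]; exact ha.add_left hb
  have hcomm : ∀ x y, Commute (F x) (G y) := by
    intro x y
    obtain ⟨w, rfl⟩ := RingQuot.mkAlgHom_surjective k (PathRel k Q'') y
    induction w using FreeAlgebra.induction with
    | grade0 r => rw [AlgHom.commutes, AlgHom.commutes]; exact (Algebra.commutes r _).symm
    | grade1 t => exact hcommGen x t
    | mul a b ha hb => rw [map_mul, map_mul]; exact ha.mul_right hb
    | add a b ha hb => rw [map_add, map_add]; exact ha.add_right hb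
  set φ : I.ringCon.Quotient →ₐ[k] (PathAlg k Q' ⊗[k] PathAlg k Q'') :=
    quotLift (k := k) (S := PathAlg k Q' ⊗[k] PathAlg k Q'') I (phi1 (k := k) Q' Q'') hvanish with hφ
  set ψ : (PathAlg k Q' ⊗[k] PathAlg k Q'') →ₐ[k] I.ringCon.Quotient :=
    Algebra.TensorProduct.lift F G hcomm with hψ
  -- φ ∘ F = includeLeft, φ ∘ G = includeRight
  have hφF : φ.comp F = (Algebra.TensorProduct.includeLeft :
      PathAlg k Q' →ₐ[k] PathAlg k Q' ⊗[k] PathAlg k Q'') := by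
    rw [hφ, hF, ← AlgHom.comp_assoc]
    apply RingQuot.ringQuot_ext'
    apply FreeAlgebra.hom_ext
    funext s
    rcases s with i | a
    · show φ (quotAlgHom (k := k) I (Fhom (k := k) Q' Q'' (vtxElem Q' i)))
        = vtxElem Q' i ⊗ₜ[k] (1 : PathAlg k Q'')
      rw [Fhom_vtx, hφ, quotLift_quotAlgHom, phi1_sV']
    · show φ (quotAlgHom (k := k) I (Fhom (k := k) Q' Q'' (edgeElem k Q' a)))
        = edgeElem k Q' a ⊗ₜ[k] (1 : PathAlg k Q'')
      rw [Fhom_edge, hφ, quotLift_quotAlgHom, phi1_sE']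
  have hφG : φ.comp G = Algebra.TensorProduct.includeRight := by
    rw [hφ, hG, ← AlgHom.comp_assoc]
    apply RingQuot.ringQuot_ext'
    apply FreeAlgebra.hom_ext
    funext t
    rcases t with j | b
    · show φ (quotAlgHom (k := k) I (Ghom (k := k) Q' Q'' (vtxElem Q'' j)))
        = (1 : PathAlg k Q') ⊗ₜ[k] vtxElem Q'' j
      rw [Ghom_vtx, hφ, quotLift_quotAlgHom, phi1_sV'']
    · show φ (quotAlgHom (k := k) I (Ghom (k := k) Q' Q'' (edgeElem k Q'' b)))
        = (1 : PathAlg k Q') ⊗ₜ[k] edgeElem k Q'' b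
      rw [Ghom_edge, hφ, quotLift_quotAlgHom, phi1_sE'']
  have h1 : φ.comp ψ = AlgHom.id k (PathAlg k Q' ⊗[k] PathAlg k Q'') := by
    apply Algebra.TensorProduct.ext'
    intro a b
    rw [AlgHom.comp_apply, hψ, Algebra.TensorProduct.lift_tmul, map_mul]
    have ha := AlgHom.congr_fun hφF a
    have hb := AlgHom.congr_fun hφG b
    rw [AlgHom.comp_apply] at ha hb
    rw [ha, hb, Algebra.TensorProduct.includeLeft_apply,
      Algebra.TensorProduct.includeRight_apply, Algebra.TensorProduct.tmul_mul_tmul,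
      one_mul, mul_one, AlgHom.coe_id, id_eq]
  have h2 : ψ.comp φ = AlgHom.id k I.ringCon.Quotient := by
    have hkey : (ψ.comp φ).comp (quotAlgHom (k := k) I) = quotAlgHom (k := k) I := by
      apply RingQuot.ringQuot_ext'
      apply FreeAlgebra.hom_ext
      funext s
      rcases s with p | e
      · obtain ⟨i, j⟩ := p
        show ψ (φ (quotAlgHom (k := k) I (vtxElem (Q'.tensor Q'') (i, j))))
          = quotAlgHom (k := k) I (vtxElem (Q'.tensor Q'') (i, j))
        rw [hφ, quotLift_quotAlgHom, phi1_vtx, hψ, Algebra.TensorProduct.lift_tmul]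
        show quotAlgHom (k := k) I (Fhom (k := k) Q' Q'' (vtxElem Q' i)) *
            quotAlgHom (k := k) I (Ghom (k := k) Q' Q'' (vtxElem Q'' j)) = _
        rw [Fhom_vtx, Ghom_vtx, ← map_mul, sV'_mul_sV'']
      · rcases e with ⟨a, j⟩ | ⟨i, b⟩
        · show ψ (φ (quotAlgHom (k := k) I (edgeElem k (Q'.tensor Q'') (Sum.inl (a, j)))))
            = quotAlgHom (k := k) I (edgeElem k (Q'.tensor Q'') (Sum.inl (a, j)))
          rw [hφ, quotLift_quotAlgHom, phi1_edge_inl, hψ, Algebra.TensorProduct.lift_tmul]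
          show quotAlgHom (k := k) I (Fhom (k := k) Q' Q'' (edgeElem k Q' a)) *
              quotAlgHom (k := k) I (Ghom (k := k) Q' Q'' (vtxElem Q'' j)) = _
          rw [Fhom_edge, Ghom_vtx, ← map_mul, sE'_mul_sV'']
        · show ψ (φ (quotAlgHom (k := k) I (edgeElem k (Q'.tensor Q'') (Sum.inr (i, b)))))
            = quotAlgHom (k := k) I (edgeElem k (Q'.tensor Q'') (Sum.inr (i, b)))
          rw [hφ, quotLift_quotAlgHom, phi1_edge_inr, hψ, Algebra.TensorProduct.lift_tmul]
          show quotAlgHom (k := k) I (Fhom (k := k) Q' Q'' (vtxElem Q' i)) *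
              quotAlgHom (k := k) I (Ghom (k := k) Q' Q'' (edgeElem k Q'' b)) = _
          rw [Fhom_vtx, Ghom_edge, ← map_mul, sV'_mul_sE'']
    apply AlgHom.ext
    intro q
    obtain ⟨z, rfl⟩ := quotAlgHom_surjective (k := k) I q
    simpa using AlgHom.congr_fun hkey z
  exact ⟨AlgEquiv.ofAlgHom φ ψ h1 h2⟩
end

section
/- Let Q', Q'' be finite quivers and φ = (φ_α) ∈ Rep(Q',d'), ψ = (ψ_β) ∈ Rep(Q'',d'') satisfy, for real parameters θ', θ'', the equations Σ_{hα=i} φ_αφ_α* − Σ_{tα=i} φ_α*φ_α = θ'_i·Id for all i ∈ Q'_0 and Σ_{hβ=j} ψ_βψ_β* − Σ_{tβ=j} ψ_β*ψ_β = θ''_j·Id for all j ∈ Q''_0. Then the tensor product representation φ⊗ψ of the tensor quiver Q'⊗Q'', with maps φ_α⊗Id on edges (α,j) and Id⊗ψ_β on edges (i,β), satisfies Σ_{h(e)=(i,j)} δ_e δ_e* − Σ_{t(e)=(i,j)} δ_e* δ_e = (θ'_i + θ''_j)·Id_{ℂ^{d'_i}⊗ℂ^{d''_j}} for all vertices (i,j).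 -/
open Matrix
open scoped Kronecker

/-- `Σ_{h(e)=v} M_e M_e* − Σ_{t(e)=v} M_e* M_e` at a vertex `v` of a quiver whose
vertex `v` carries the Hermitian space `ℂ^{n v}`; adjoints are conjugate transposes. -/
noncomputable def vtxSum (Q : FinQuiver) (n : Q.V → Type)
    [∀ v, Fintype (n v)] [∀ v, DecidableEq (n v)]
    (M : ∀ e : Q.E, Matrix (n (Q.h e)) (n (Q.t e)) ℂ) (v : Q.V) :
    Matrix (n v) (n v) ℂ :=
  (∑ e : Q.E, if he : Q.h e = v then he ▸ (M e * (M e)ᴴ) else 0) -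
    ∑ e : Q.E, if he : Q.t e = v then he ▸ ((M e)ᴴ * M e) else 0

/-- The tensor product representation of the tensor quiver: `φ_α ⊗ Id` on edges
`(α,j)` and `Id ⊗ ψ_β` on edges `(i,β)`. -/
noncomputable def tensorRepMatrices (Q' Q'' : FinQuiver) (d' : Q'.V → ℕ) (d'' : Q''.V → ℕ)
    (φ : ∀ a : Q'.E, Matrix (Fin (d' (Q'.h a))) (Fin (d' (Q'.t a))) ℂ)
    (ψ : ∀ b : Q''.E, Matrix (Fin (d'' (Q''.h b))) (Fin (d'' (Q''.t b))) ℂ) :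
    ∀ e : (Q'.tensor Q'').E,
      Matrix (Fin (d' ((Q'.tensor Q'').h e).1) × Fin (d'' ((Q'.tensor Q'').h e).2))
        (Fin (d' ((Q'.tensor Q'').t e).1) × Fin (d'' ((Q'.tensor Q'').t e).2)) ℂ
  | .inl (a, j) => φ a ⊗ₖ (1 : Matrix (Fin (d'' j)) (Fin (d'' j)) ℂ)
  | .inr (i, b) => (1 : Matrix (Fin (d' i)) (Fin (d' i)) ℂ) ⊗ₖ ψ b

/-- Left distributivity of Kronecker product over sums. -/
theorem sum_kron_left {ι m n p q : Type*} (s : Finset ι)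
    (f : ι → Matrix m n ℂ) (B : Matrix p q ℂ) :
    (∑ x ∈ s, f x) ⊗ₖ B = ∑ x ∈ s, f x ⊗ₖ B := by
  ext ⟨a, b⟩ ⟨c, d⟩
  simp [Matrix.kroneckerMap_apply, Finset.sum_mul, Matrix.sum_apply]

/-- Right distributivity of Kronecker product over sums. -/
theorem sum_kron_right {ι m n p q : Type*} (s : Finset ι)
    (A : Matrix m n ℂ) (f : ι → Matrix p q ℂ) :
    A ⊗ₖ (∑ x ∈ s, f x) = ∑ x ∈ s, A ⊗ₖ f x := by
  ext ⟨a, b⟩ ⟨c, d⟩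
  simp [Matrix.kroneckerMap_apply, Finset.mul_sum, Matrix.sum_apply]

/-- Kronecker product and subtraction, left. -/
theorem sub_kron_left {m n p q : Type*} (A B : Matrix m n ℂ) (C : Matrix p q ℂ) :
    (A - B) ⊗ₖ C = A ⊗ₖ C - B ⊗ₖ C := by
  ext ⟨a, b⟩ ⟨c, d⟩
  simp [Matrix.kroneckerMap_apply, sub_mul]

/-- Kronecker product and subtraction, right. -/
theorem sub_kron_right {m n p q : Type*} (A : Matrix m n ℂ) (B C : Matrix p q ℂ) :
    A ⊗ₖ (B - C) = A ⊗ₖ B - A ⊗ₖ C := by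
  ext ⟨a, b⟩ ⟨c, d⟩
  simp [Matrix.kroneckerMap_apply, mul_sub]

/-- Conjugate transpose of a Kronecker product. -/
theorem conjT_kron {m n p q : Type*} (A : Matrix m n ℂ) (B : Matrix p q ℂ) :
    (A ⊗ₖ B)ᴴ = Aᴴ ⊗ₖ Bᴴ := by
  ext ⟨a, b⟩ ⟨c, d⟩
  simp [Matrix.conjTranspose_apply, Matrix.kroneckerMap_apply, mul_comm]

/-- If `φ ∈ Rep(Q',d')` satisfies `Σ_{hα=i} φ_αφ_α* − Σ_{tα=i} φ_α*φ_α = θ'_i·Id` for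
all `i`, and `ψ ∈ Rep(Q'',d'')` satisfies the analogous equations for `θ''`, then the
tensor product representation `φ⊗ψ` of the tensor quiver `Q'⊗Q''` satisfies
`Σ_{h(e)=(i,j)} δ_eδ_e* − Σ_{t(e)=(i,j)} δ_e*δ_e = (θ'_i + θ''_j)·Id` at each
vertex `(i,j)`. -/
theorem tensor_rep_vortex (Q' Q'' : FinQuiver) (d' : Q'.V → ℕ) (d'' : Q''.V → ℕ)
    (θ' : Q'.V → ℝ) (θ'' : Q''.V → ℝ)
    (φ : ∀ a : Q'.E, Matrix (Fin (d' (Q'.h a))) (Fin (d' (Q'.t a))) ℂ)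
    (ψ : ∀ b : Q''.E, Matrix (Fin (d'' (Q''.h b))) (Fin (d'' (Q''.t b))) ℂ)
    (hφ : ∀ i : Q'.V, vtxSum Q' (fun i => Fin (d' i)) φ i = (θ' i : ℂ) • 1)
    (hψ : ∀ j : Q''.V, vtxSum Q'' (fun j => Fin (d'' j)) ψ j = (θ'' j : ℂ) • 1) :
    ∀ v : (Q'.tensor Q'').V,
      vtxSum (Q'.tensor Q'') (fun v => Fin (d' v.1) × Fin (d'' v.2))
          (tensorRepMatrices Q' Q'' d' d'' φ ψ) v =
        ((θ' v.1 + θ'' v.2 : ℝ) : ℂ) • 1 := by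
  rintro ⟨i, j⟩
  set M := tensorRepMatrices Q' Q'' d' d'' φ ψ with hM
  -- pointwise identities for the four kinds of summands
  have h1 : ∀ (a : Q'.E) (j' : Q''.V),
      (@dite _ ((Q'.tensor Q'').h (.inl (a, j')) = (i, j)) ((Q'.tensor Q'').decV _ _) (fun he =>
        he ▸ (M (.inl (a, j')) * (M (.inl (a, j')))ᴴ)) (fun _ => 0)) =
      (if j' = j then
        (if ha : Q'.h a = i then ha ▸ (φ a * (φ a)ᴴ) else 0) ⊗ₖ
          (1 : Matrix (Fin (d'' j)) (Fin (d'' j)) ℂ) else 0) := by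
    intro a j'
    by_cases hj : j' = j
    · subst hj
      by_cases ha : Q'.h a = i
      · subst ha
        rw [dif_pos (show (Q'.tensor Q'').h (Sum.inl (a, j')) = (Q'.h a, j') from rfl),
          dif_pos (rfl : Q'.h a = Q'.h a), if_pos (rfl : j' = j')]
        show (φ a ⊗ₖ (1 : Matrix (Fin (d'' j')) (Fin (d'' j')) ℂ)) *
          (φ a ⊗ₖ (1 : Matrix (Fin (d'' j')) (Fin (d'' j')) ℂ))ᴴ = _
        rw [conjT_kron, Matrix.conjTranspose_one, ← Matrix.mul_kronecker_mul, mul_one]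
      · rw [dif_neg (c := (Q'.tensor Q'').h (Sum.inl (a, j')) = (i, j')) (fun h => ha (congrArg Prod.fst h)), if_pos rfl, dif_neg ha,
          Matrix.zero_kronecker]
    · rw [dif_neg (c := (Q'.tensor Q'').h (Sum.inl (a, j')) = (i, j)) (fun h => hj (congrArg Prod.snd h)), if_neg hj]
  have h2 : ∀ (i' : Q'.V) (b : Q''.E),
      (@dite _ ((Q'.tensor Q'').h (.inr (i', b)) = (i, j)) ((Q'.tensor Q'').decV _ _) (fun he =>
        he ▸ (M (.inr (i', b)) * (M (.inr (i', b)))ᴴ)) (fun _ => 0)) =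
      (if i' = i then
        (1 : Matrix (Fin (d' i)) (Fin (d' i)) ℂ) ⊗ₖ
          (if hb : Q''.h b = j then hb ▸ (ψ b * (ψ b)ᴴ) else 0) else 0) := by
    intro i' b
    by_cases hi : i' = i
    · subst hi
      by_cases hb : Q''.h b = j
      · subst hb
        rw [dif_pos (show (Q'.tensor Q'').h (Sum.inr (i', b)) = (i', Q''.h b) from rfl),
          dif_pos (rfl : Q''.h b = Q''.h b), if_pos (rfl : i' = i')]
        show ((1 : Matrix (Fin (d' i')) (Fin (d' i')) ℂ) ⊗ₖ ψ b) *
          ((1 : Matrix (Fin (d' i')) (Fin (d' i')) ℂ) ⊗ₖ ψ b)ᴴ = _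
        rw [conjT_kron, Matrix.conjTranspose_one, ← Matrix.mul_kronecker_mul, mul_one]
      · rw [dif_neg (c := (Q'.tensor Q'').h (Sum.inr (i', b)) = (i', j)) (fun h => hb (congrArg Prod.snd h)), if_pos rfl, dif_neg hb,
          Matrix.kronecker_zero]
    · rw [dif_neg (c := (Q'.tensor Q'').h (Sum.inr (i', b)) = (i, j)) (fun h => hi (congrArg Prod.fst h)), if_neg hi]
  have h3 : ∀ (a : Q'.E) (j' : Q''.V),
      (@dite _ ((Q'.tensor Q'').t (.inl (a, j')) = (i, j)) ((Q'.tensor Q'').decV _ _) (fun he =>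
        he ▸ ((M (.inl (a, j')))ᴴ * M (.inl (a, j')))) (fun _ => 0)) =
      (if j' = j then
        (if ha : Q'.t a = i then ha ▸ ((φ a)ᴴ * φ a) else 0) ⊗ₖ
          (1 : Matrix (Fin (d'' j)) (Fin (d'' j)) ℂ) else 0) := by
    intro a j'
    by_cases hj : j' = j
    · subst hj
      by_cases ha : Q'.t a = i
      · subst ha
        rw [dif_pos (show (Q'.tensor Q'').t (Sum.inl (a, j')) = (Q'.t a, j') from rfl),
          dif_pos (rfl : Q'.t a = Q'.t a), if_pos (rfl : j' = j')]
        show (φ a ⊗ₖ (1 : Matrix (Fin (d'' j')) (Fin (d'' j')) ℂ))ᴴ *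
          (φ a ⊗ₖ (1 : Matrix (Fin (d'' j')) (Fin (d'' j')) ℂ)) = _
        rw [conjT_kron, Matrix.conjTranspose_one, ← Matrix.mul_kronecker_mul, mul_one]
      · rw [dif_neg (c := (Q'.tensor Q'').t (Sum.inl (a, j')) = (i, j')) (fun h => ha (congrArg Prod.fst h)), if_pos rfl, dif_neg ha,
          Matrix.zero_kronecker]
    · rw [dif_neg (c := (Q'.tensor Q'').t (Sum.inl (a, j')) = (i, j)) (fun h => hj (congrArg Prod.snd h)), if_neg hj]
  have h4 : ∀ (i' : Q'.V) (b : Q''.E),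
      (@dite _ ((Q'.tensor Q'').t (.inr (i', b)) = (i, j)) ((Q'.tensor Q'').decV _ _) (fun he =>
        he ▸ ((M (.inr (i', b)))ᴴ * M (.inr (i', b)))) (fun _ => 0)) =
      (if i' = i then
        (1 : Matrix (Fin (d' i)) (Fin (d' i)) ℂ) ⊗ₖ
          (if hb : Q''.t b = j then hb ▸ ((ψ b)ᴴ * ψ b) else 0) else 0) := by
    intro i' b
    by_cases hi : i' = i
    · subst hi
      by_cases hb : Q''.t b = j
      · subst hb
        rw [dif_pos (show (Q'.tensor Q'').t (Sum.inr (i', b)) = (i', Q''.t b) from rfl),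
          dif_pos (rfl : Q''.t b = Q''.t b), if_pos (rfl : i' = i')]
        show ((1 : Matrix (Fin (d' i')) (Fin (d' i')) ℂ) ⊗ₖ ψ b)ᴴ *
          ((1 : Matrix (Fin (d' i')) (Fin (d' i')) ℂ) ⊗ₖ ψ b) = _
        rw [conjT_kron, Matrix.conjTranspose_one, ← Matrix.mul_kronecker_mul, mul_one]
      · rw [dif_neg (c := (Q'.tensor Q'').t (Sum.inr (i', b)) = (i', j)) (fun h => hb (congrArg Prod.snd h)), if_pos rfl, dif_neg hb,
          Matrix.kronecker_zero]
    · rw [dif_neg (c := (Q'.tensor Q'').t (Sum.inr (i', b)) = (i, j)) (fun h => hi (congrArg Prod.fst h)), if_neg hi]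
  have hφi := hφ i
  have hψj := hψ j
  unfold vtxSum at hφi hψj ⊢
  have split : ∀ F : (Q'.tensor Q'').E →
      Matrix (Fin (d' i) × Fin (d'' j)) (Fin (d' i) × Fin (d'' j)) ℂ,
      ∑ e : (Q'.tensor Q'').E, F e =
        ∑ p : Q'.E × Q''.V, F (.inl p) + ∑ p : Q'.V × Q''.E, F (.inr p) :=
    fun F => Fintype.sum_sum_type F
  rw [split, split, Fintype.sum_prod_type,
    Fintype.sum_prod_type, Fintype.sum_prod_type, Fintype.sum_prod_type]
  simp only [h1, h2, h3, h4]
  simp only [Finset.sum_ite_irrel, Finset.sum_const_zero,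
    Finset.sum_ite_eq', Finset.mem_univ, if_true]
  rw [← sum_kron_left, ← sum_kron_right, ← sum_kron_left, ← sum_kron_right]
  have : ∀ (A B : Matrix (Fin (d' i)) (Fin (d' i)) ℂ)
      (C D : Matrix (Fin (d'' j)) (Fin (d'' j)) ℂ),
      A ⊗ₖ (1 : Matrix (Fin (d'' j)) (Fin (d'' j)) ℂ) +
        (1 : Matrix (Fin (d' i)) (Fin (d' i)) ℂ) ⊗ₖ C -
        (B ⊗ₖ 1 + (1 : Matrix (Fin (d' i)) (Fin (d' i)) ℂ) ⊗ₖ D) =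
      (A - B) ⊗ₖ 1 + (1 : Matrix (Fin (d' i)) (Fin (d' i)) ℂ) ⊗ₖ (C - D) := by
    intro A B C D
    rw [sub_kron_left, sub_kron_right]
    abel
  rw [this, hφi, hψj, Matrix.smul_kronecker, Matrix.kronecker_smul,
    Matrix.one_kronecker_one, ← add_smul]
  push_cast
  rfl
end

section
/- For the quiver Q = Q_n ⊗ Q_m (the tensor product of the n-edge and m-edge Kronecker quivers) with dimension vector d = (1,1,1,1) and stability parameter θ = (−1,0,0,1), the ring of semi-invariants ⊕_{η≥0} O^{χ_θ^η} is isomorphic to the subring ℂ[x_i y_j, w_k z_l] of ℂ[x_1,…,x_n,y_1,…,y_m,w_1,…,w_m,z_1,…,z_n], which is isomorphic to ℂ[s_{ij}, t_{kl}] modulo the ideal generated by the 2×2 Segre relations s_{i₁j₁}s_{i₂j₂} − s_{i₁j₂}s_{i₂j₁} and t_{k₁l₁}t_{k₂l₂} − t_{k₁l₂}t_{k₂l₁}. -/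
open MvPolynomial

/-- Variables `x_1,…,x_n, y_1,…,y_m, w_1,…,w_m, z_1,…,z_n` for the coordinate ring of
`Rep(Q_n ⊗ Q_m, (1,1,1,1)) ≅ 𝔸^{2(n+m)}`. -/
abbrev TQVars (n m : ℕ) := (Fin n ⊕ Fin m) ⊕ (Fin m ⊕ Fin n)

/-- The scaling factor by which `(t₁,t₂,t₃,t₄)` acts on each coordinate:
`x_i ↦ (t₂/t₁)x_i`, `y_j ↦ (t₄/t₂)y_j`, `w_k ↦ (t₃/t₁)w_k`, `z_l ↦ (t₄/t₃)z_l`. -/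
noncomputable def torusScale (n m : ℕ) (t₁ t₂ t₃ t₄ : ℂˣ) : TQVars n m → ℂ
  | .inl (.inl _) => (t₂ : ℂ) * (t₁ : ℂ)⁻¹
  | .inl (.inr _) => (t₄ : ℂ) * (t₂ : ℂ)⁻¹
  | .inr (.inl _) => (t₃ : ℂ) * (t₁ : ℂ)⁻¹
  | .inr (.inr _) => (t₄ : ℂ) * (t₃ : ℂ)⁻¹

/-- The `ℂ`-submodule of semi-invariants of weight `χ_θ^η` for `θ = (−1,0,0,1)`:
polynomials `f` with `f(t·φ) = (t₄/t₁)^η f(φ)` for all `t` and `φ`. -/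
noncomputable def SemiInvTQ (n m : ℕ) (η : ℕ) :
    Submodule ℂ (MvPolynomial (TQVars n m) ℂ) where
  carrier := { f | ∀ (t₁ t₂ t₃ t₄ : ℂˣ) (φ : TQVars n m → ℂ),
    MvPolynomial.eval (fun v => torusScale n m t₁ t₂ t₃ t₄ v * φ v) f =
      ((t₄ : ℂ) * (t₁ : ℂ)⁻¹) ^ η * MvPolynomial.eval φ f }
  add_mem' := fun hf hg t₁ t₂ t₃ t₄ φ => by
    simp only [_root_.map_add]; rw [hf t₁ t₂ t₃ t₄ φ, hg t₁ t₂ t₃ t₄ φ]; ring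
  zero_mem' := fun t₁ t₂ t₃ t₄ φ => by simp
  smul_mem' := fun c f hf t₁ t₂ t₃ t₄ φ => by
    simp only [MvPolynomial.smul_eval]; rw [hf t₁ t₂ t₃ t₄ φ]; ring

/-- The set of products `x_i y_j` and `w_k z_l`. -/
noncomputable def segreProducts (n m : ℕ) : Set (MvPolynomial (TQVars n m) ℂ) :=
  { p | (∃ (i : Fin n) (j : Fin m), p = X (Sum.inl (Sum.inl i)) * X (Sum.inl (Sum.inr j))) ∨
        (∃ (k : Fin m) (l : Fin n), p = X (Sum.inr (Sum.inl k)) * X (Sum.inr (Sum.inr l))) }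

/-- The `2×2` Segre relations among the variables `s_{ij}` and `t_{kl}`. -/
noncomputable def segreRelations (n m : ℕ) :
    Set (MvPolynomial ((Fin n × Fin m) ⊕ (Fin m × Fin n)) ℂ) :=
  { p | (∃ (i₁ i₂ : Fin n) (j₁ j₂ : Fin m),
          p = X (Sum.inl (i₁, j₁)) * X (Sum.inl (i₂, j₂)) -
              X (Sum.inl (i₁, j₂)) * X (Sum.inl (i₂, j₁))) ∨
        (∃ (k₁ k₂ : Fin m) (l₁ l₂ : Fin n),
          p = X (Sum.inr (k₁, l₁)) * X (Sum.inr (k₂, l₂)) -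
              X (Sum.inr (k₁, l₂)) * X (Sum.inr (k₂, l₁))) }



lemma segre_swap_lemma {R σ τ : Type*} [CommRing R] (I : Ideal R) (f : σ × τ → R)
    (hrel : ∀ i₁ i₂ j₁ j₂, f (i₁, j₁) * f (i₂, j₂) - f (i₁, j₂) * f (i₂, j₁) ∈ I) :
    ∀ (M M' : Multiset (σ × τ)), M.map Prod.fst = M'.map Prod.fst →
      M.map Prod.snd = M'.map Prod.snd →
      (M.map f).prod - (M'.map f).prod ∈ I := by
  classical
  intro M
  induction M using Multiset.strongInductionOn with
  | _ M ih =>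
    intro M' hfst hsnd
    rcases Multiset.empty_or_exists_mem M with rfl | ⟨a, haM⟩
    · have : M'.map Prod.fst = 0 := by simpa using hfst.symm
      rw [Multiset.map_eq_zero] at this
      simp [this]
    · have cons_case : ∀ (N N' : Multiset (σ × τ)), N < M → a ∈ N' →
          (a ::ₘ N).map Prod.fst = N'.map Prod.fst →
          (a ::ₘ N).map Prod.snd = N'.map Prod.snd →
          ((a ::ₘ N).map f).prod - (N'.map f).prod ∈ I := by
        intro N N' hNM haN' h1 h2
        rw [← Multiset.cons_erase haN'] at h1 h2 ⊢
        simp only [Multiset.map_cons, Multiset.prod_cons] at h1 h2 ⊢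
        rw [Multiset.cons_inj_right] at h1 h2
        have hmem := ih N hNM (N'.erase a) h1 h2
        have h : f a * (N.map f).prod - f a * ((N'.erase a).map f).prod
            = f a * ((N.map f).prod - ((N'.erase a).map f).prod) := by ring
        rw [h]
        exact I.mul_mem_left _ hmem
      obtain ⟨i, j⟩ := a
      have hM : M = (i, j) ::ₘ M.erase (i, j) := (Multiset.cons_erase haM).symm
      have hlt : M.erase (i, j) < M := Multiset.erase_lt.2 haM
      have hi : i ∈ M'.map Prod.fst := by
        rw [← hfst, hM]; simp
      obtain ⟨u, huM', hu1⟩ := Multiset.mem_map.1 hi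
      by_cases hu2 : u.2 = j
      · have hu : u = (i, j) := by simp [Prod.ext_iff, hu1, hu2]
        rw [hM] at hfst hsnd ⊢
        exact cons_case _ _ hlt (hu ▸ huM') hfst hsnd
      · have hj : j ∈ M'.map Prod.snd := by
          rw [← hsnd, hM]; simp
        obtain ⟨v, hvM', hv2⟩ := Multiset.mem_map.1 hj
        have huv : u ≠ v := fun h => hu2 (by rw [h, hv2])
        have hvM'e : v ∈ M'.erase u := (Multiset.mem_erase_of_ne (Ne.symm huv)).2 hvM'
        have hM' : M' = u ::ₘ v ::ₘ (M'.erase u).erase v := by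
          rw [Multiset.cons_erase hvM'e, Multiset.cons_erase huM']
        set M₂ := (M'.erase u).erase v with hM₂
        set M'' := (i, j) ::ₘ (v.1, u.2) ::ₘ M₂ with hM''def
        have hfst'' : M''.map Prod.fst = M'.map Prod.fst := by
          rw [hM', hM''def]; simp [hu1]
        have hsnd'' : M''.map Prod.snd = M'.map Prod.snd := by
          rw [hM', hM''def]; simp only [Multiset.map_cons]
          rw [hv2, Multiset.cons_swap]
        have step1 : (M.map f).prod - (M''.map f).prod ∈ I := by
          rw [hM]
          exact cons_case _ _ hlt (by simp [hM''def]) (by rw [← hM, hfst, ← hfst''])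
            (by rw [← hM, hsnd, ← hsnd''])
        have step2 : (M''.map f).prod - (M'.map f).prod ∈ I := by
          rw [hM', hM''def]
          simp only [Multiset.map_cons, Multiset.prod_cons]
          have key : f (i, j) * f (v.1, u.2) - f u * f v ∈ I := by
            have hu' : u = (i, u.2) := by rw [← hu1]
            have hv' : v = (v.1, j) := by rw [← hv2]
            rw [hu', hv']
            simpa using (I.neg_mem (hrel i v.1 u.2 j))
          have heq : f (i, j) * (f (v.1, u.2) * (M₂.map f).prod) -
              f u * (f v * (M₂.map f).prod) =
              (f (i, j) * f (v.1, u.2) - f u * f v) * (M₂.map f).prod := by ring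
          rw [heq]
          exact I.mul_mem_right _ key
        have htot := I.add_mem step1 step2
        simpa using htot


lemma prod_X_toMultiset {σ R : Type*} [CommSemiring R] (e : σ →₀ ℕ) :
    ((Finsupp.toMultiset e).map (X : σ → MvPolynomial σ R)).prod = monomial e 1 := by
  induction e using Finsupp.induction with
  | zero => simp
  | single_add a n f haf hn ih =>
    rw [Finsupp.toMultiset_add, Multiset.map_add, Multiset.prod_add, ih,
      Finsupp.toMultiset_single, Multiset.map_nsmul, Multiset.map_singleton,
      Multiset.prod_nsmul, Multiset.prod_singleton, X_pow_eq_monomial, monomial_mul, one_mul]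

lemma prod_X_comp {σ τ R : Type*} [CommSemiring R] (g : σ → τ) (e : σ →₀ ℕ) :
    ((Finsupp.toMultiset e).map (fun a => (X (g a) : MvPolynomial τ R))).prod
      = monomial (e.mapDomain g) 1 := by
  have h : ((Finsupp.toMultiset e).map (fun a => (X (g a) : MvPolynomial τ R)))
      = ((Finsupp.toMultiset e).map g).map X := by
    rw [Multiset.map_map]; rfl
  rw [h, Finsupp.toMultiset_map, prod_X_toMultiset]

lemma prod_X_multiset {σ τ R : Type*} [CommSemiring R] [DecidableEq σ] (g : σ → τ)
    (M : Multiset σ) :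
    (M.map (fun a => (X (g a) : MvPolynomial τ R))).prod
      = monomial ((Multiset.toFinsupp M).mapDomain g) 1 := by
  rw [← prod_X_comp, Multiset.toFinsupp_toMultiset]

namespace SegreAux

/-- source variables -/
abbrev SVars (n m : ℕ) := (Fin n × Fin m) ⊕ (Fin m × Fin n)

noncomputable def psi (n m : ℕ) :
    MvPolynomial (SVars n m) ℂ →ₐ[ℂ] MvPolynomial (TQVars n m) ℂ :=
  aeval (Sum.elim
    (fun p : Fin n × Fin m => X (Sum.inl (Sum.inl p.1)) * X (Sum.inl (Sum.inr p.2)))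
    (fun p : Fin m × Fin n => X (Sum.inr (Sum.inl p.1)) * X (Sum.inr (Sum.inr p.2))))

variable {n m : ℕ}

noncomputable def encode (α : Fin n →₀ ℕ) (β : Fin m →₀ ℕ) (γ : Fin m →₀ ℕ)
    (δ : Fin n →₀ ℕ) : TQVars n m →₀ ℕ :=
  α.mapDomain (fun i => Sum.inl (Sum.inl i)) + β.mapDomain (fun j => Sum.inl (Sum.inr j)) +
  γ.mapDomain (fun k => Sum.inr (Sum.inl k)) + δ.mapDomain (fun l => Sum.inr (Sum.inr l))

lemma encode_apply (α : Fin n →₀ ℕ) (β : Fin m →₀ ℕ) (γ : Fin m →₀ ℕ) (δ : Fin n →₀ ℕ) :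
    (∀ i, encode α β γ δ (Sum.inl (Sum.inl i)) = α i) ∧
    (∀ j, encode α β γ δ (Sum.inl (Sum.inr j)) = β j) ∧
    (∀ k, encode α β γ δ (Sum.inr (Sum.inl k)) = γ k) ∧
    (∀ l, encode α β γ δ (Sum.inr (Sum.inr l)) = δ l) := by
  have hX : Function.Injective (fun i : Fin n => (Sum.inl (Sum.inl i) : TQVars n m)) := by
    intro a b hab; simpa using hab
  have hY : Function.Injective (fun j : Fin m => (Sum.inl (Sum.inr j) : TQVars n m)) := by
    intro a b hab; simpa using hab
  have hW : Function.Injective (fun k : Fin m => (Sum.inr (Sum.inl k) : TQVars n m)) := by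
    intro a b hab; simpa using hab
  have hZ : Function.Injective (fun l : Fin n => (Sum.inr (Sum.inr l) : TQVars n m)) := by
    intro a b hab; simpa using hab
  refine ⟨fun i => ?_, fun j => ?_, fun k => ?_, fun l => ?_⟩ <;>
    simp only [encode, Finsupp.add_apply] <;>
    rw [show ∀ x y z w : ℕ, x + y + z + w = x + y + z + w from fun _ _ _ _ => rfl]
  · rw [Finsupp.mapDomain_apply hX, Finsupp.mapDomain_notin_range _ _ (by simp),
      Finsupp.mapDomain_notin_range _ _ (by simp), Finsupp.mapDomain_notin_range _ _ (by simp)]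
    ring
  · rw [Finsupp.mapDomain_apply hY, Finsupp.mapDomain_notin_range _ _ (by simp),
      Finsupp.mapDomain_notin_range _ _ (by simp), Finsupp.mapDomain_notin_range _ _ (by simp)]
    ring
  · rw [Finsupp.mapDomain_apply hW, Finsupp.mapDomain_notin_range _ _ (by simp),
      Finsupp.mapDomain_notin_range _ _ (by simp), Finsupp.mapDomain_notin_range _ _ (by simp)]
    ring
  · rw [Finsupp.mapDomain_apply hZ, Finsupp.mapDomain_notin_range _ _ (by simp),
      Finsupp.mapDomain_notin_range _ _ (by simp), Finsupp.mapDomain_notin_range _ _ (by simp)]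
    ring

lemma encode_injective (α α' : Fin n →₀ ℕ) (β β' : Fin m →₀ ℕ) (γ γ' : Fin m →₀ ℕ)
    (δ δ' : Fin n →₀ ℕ) (h : encode α β γ δ = encode α' β' γ' δ') :
    α = α' ∧ β = β' ∧ γ = γ' ∧ δ = δ' := by
  obtain ⟨h1, h2, h3, h4⟩ := encode_apply α β γ δ
  obtain ⟨h1', h2', h3', h4'⟩ := encode_apply α' β' γ' δ'
  refine ⟨Finsupp.ext fun i => ?_, Finsupp.ext fun j => ?_,
    Finsupp.ext fun k => ?_, Finsupp.ext fun l => ?_⟩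
  · rw [← h1 i, ← h1' i, h]
  · rw [← h2 j, ← h2' j, h]
  · rw [← h3 k, ← h3' k, h]
  · rw [← h4 l, ← h4' l, h]

/-- every exponent vector is an `encode` of its four restrictions -/
lemma eq_encode (e : TQVars n m →₀ ℕ) :
    e = encode (e.comapDomain (fun i => Sum.inl (Sum.inl i)) (Set.injOn_of_injective (by
          intro a b hab; simpa using hab)))
        (e.comapDomain (fun j => Sum.inl (Sum.inr j)) (Set.injOn_of_injective (by
          intro a b hab; simpa using hab)))
        (e.comapDomain (fun k => Sum.inr (Sum.inl k)) (Set.injOn_of_injective (by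
          intro a b hab; simpa using hab)))
        (e.comapDomain (fun l => Sum.inr (Sum.inr l)) (Set.injOn_of_injective (by
          intro a b hab; simpa using hab))) := by
  ext v
  obtain ⟨h1, h2, h3, h4⟩ := encode_apply
    (n := n) (m := m)
    (e.comapDomain (fun i => Sum.inl (Sum.inl i)) (Set.injOn_of_injective (by
          intro a b hab; simpa using hab)))
    (e.comapDomain (fun j => Sum.inl (Sum.inr j)) (Set.injOn_of_injective (by
          intro a b hab; simpa using hab)))
    (e.comapDomain (fun k => Sum.inr (Sum.inl k)) (Set.injOn_of_injective (by
          intro a b hab; simpa using hab)))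
    (e.comapDomain (fun l => Sum.inr (Sum.inr l)) (Set.injOn_of_injective (by
          intro a b hab; simpa using hab)))
  rcases v with (i | j) | (k | l)
  · rw [h1]; simp [Finsupp.comapDomain_apply]
  · rw [h2]; simp [Finsupp.comapDomain_apply]
  · rw [h3]; simp [Finsupp.comapDomain_apply]
  · rw [h4]; simp [Finsupp.comapDomain_apply]

noncomputable def eX (e : TQVars n m →₀ ℕ) : Fin n →₀ ℕ :=
  e.comapDomain (fun i => Sum.inl (Sum.inl i)) (Set.injOn_of_injective (by
    intro a b hab; simpa using hab))

noncomputable def eY (e : TQVars n m →₀ ℕ) : Fin m →₀ ℕ :=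
  e.comapDomain (fun j => Sum.inl (Sum.inr j)) (Set.injOn_of_injective (by
    intro a b hab; simpa using hab))

noncomputable def eW (e : TQVars n m →₀ ℕ) : Fin m →₀ ℕ :=
  e.comapDomain (fun k => Sum.inr (Sum.inl k)) (Set.injOn_of_injective (by
    intro a b hab; simpa using hab))

noncomputable def eZ (e : TQVars n m →₀ ℕ) : Fin n →₀ ℕ :=
  e.comapDomain (fun l => Sum.inr (Sum.inr l)) (Set.injOn_of_injective (by
    intro a b hab; simpa using hab))

lemma eq_encode' (e : TQVars n m →₀ ℕ) : e = encode (eX e) (eY e) (eW e) (eZ e) :=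
  eq_encode e

lemma prod_encode (α : Fin n →₀ ℕ) (β : Fin m →₀ ℕ) (γ : Fin m →₀ ℕ) (δ : Fin n →₀ ℕ)
    (h : TQVars n m → ℂ) :
    ((encode α β γ δ).prod fun v k => h v ^ k)
      = (α.prod fun i k => h (Sum.inl (Sum.inl i)) ^ k) *
        (β.prod fun j k => h (Sum.inl (Sum.inr j)) ^ k) *
        (γ.prod fun w k => h (Sum.inr (Sum.inl w)) ^ k) *
        (δ.prod fun l k => h (Sum.inr (Sum.inr l)) ^ k) := by
  have hX : Function.Injective (fun i : Fin n => (Sum.inl (Sum.inl i) : TQVars n m)) := by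
    intro a b hab; simpa using hab
  have hY : Function.Injective (fun j : Fin m => (Sum.inl (Sum.inr j) : TQVars n m)) := by
    intro a b hab; simpa using hab
  have hW : Function.Injective (fun k : Fin m => (Sum.inr (Sum.inl k) : TQVars n m)) := by
    intro a b hab; simpa using hab
  have hZ : Function.Injective (fun l : Fin n => (Sum.inr (Sum.inr l) : TQVars n m)) := by
    intro a b hab; simpa using hab
  rw [encode,
    Finsupp.prod_add_index' (fun a => pow_zero _) (fun a b₁ b₂ => pow_add _ _ _),
    Finsupp.prod_add_index' (fun a => pow_zero _) (fun a b₁ b₂ => pow_add _ _ _),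
    Finsupp.prod_add_index' (fun a => pow_zero _) (fun a b₁ b₂ => pow_add _ _ _),
    Finsupp.prod_mapDomain_index_inj hX, Finsupp.prod_mapDomain_index_inj hY,
    Finsupp.prod_mapDomain_index_inj hW, Finsupp.prod_mapDomain_index_inj hZ]

lemma prod_const_pow {σ : Type*} (e : σ →₀ ℕ) (c : ℂ) :
    (e.prod fun _ k => c ^ k) = c ^ (e.sum fun _ k => k) := by
  rw [Finsupp.prod, Finsupp.sum, Finset.prod_pow_eq_pow_sum]

lemma two_pow_balance {a b : ℕ} (h : (2 : ℂ) ^ a * (2⁻¹ : ℂ) ^ b = 1) : a = b := by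
  have h2 : (2 : ℂ) ^ a = 2 ^ b := by
    have h3 := congrArg (· * (2 : ℂ) ^ b) h
    simp only [one_mul] at h3
    rw [mul_assoc, ← mul_pow] at h3
    norm_num at h3
    exact h3
  have h4 : ((2 ^ a : ℕ) : ℂ) = ((2 ^ b : ℕ) : ℂ) := by push_cast; exact h2
  exact Nat.pow_right_injective (by norm_num) (Nat.cast_injective h4)

/-- canonical pairing of two multisets presented as finsupps -/
noncomputable def canonPair {σ τ : Type*} [DecidableEq σ] [DecidableEq τ]
    (α : σ →₀ ℕ) (β : τ →₀ ℕ) : Multiset (σ × τ) :=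
  ↑(α.toMultiset.toList.zip β.toMultiset.toList)

lemma canonPair_fst {σ τ : Type*} [DecidableEq σ] [DecidableEq τ] (α : σ →₀ ℕ) (β : τ →₀ ℕ)
    (h : Multiset.card α.toMultiset = Multiset.card β.toMultiset) :
    (canonPair α β).map Prod.fst = α.toMultiset := by
  have hlen : α.toMultiset.toList.length ≤ β.toMultiset.toList.length := by
    rw [Multiset.length_toList, Multiset.length_toList, h]
  rw [canonPair, Multiset.map_coe, List.map_fst_zip hlen, Multiset.coe_toList]

lemma canonPair_snd {σ τ : Type*} [DecidableEq σ] [DecidableEq τ] (α : σ →₀ ℕ) (β : τ →₀ ℕ)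
    (h : Multiset.card α.toMultiset = Multiset.card β.toMultiset) :
    (canonPair α β).map Prod.snd = β.toMultiset := by
  have hlen : β.toMultiset.toList.length ≤ α.toMultiset.toList.length := by
    rw [Multiset.length_toList, Multiset.length_toList, h]
  rw [canonPair, Multiset.map_coe, List.map_snd_zip hlen, Multiset.coe_toList]

/-- the canonical monomial attached to a balanced exponent 4-tuple -/
noncomputable def canonMono (α : Fin n →₀ ℕ) (β : Fin m →₀ ℕ) (γ : Fin m →₀ ℕ)
    (δ : Fin n →₀ ℕ) : MvPolynomial (SVars n m) ℂ :=
  ((canonPair α β).map (fun p => X (Sum.inl p))).prod *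
  ((canonPair γ δ).map (fun p => X (Sum.inr p))).prod

/-- image under `psi` of a product of left variables -/
lemma psi_PS (n m : ℕ) (M : Multiset (Fin n × Fin m)) :
    psi n m ((M.map fun p => X (Sum.inl p)).prod) =
      monomial (((M.map Prod.fst).toFinsupp).mapDomain (fun i : Fin n => Sum.inl (Sum.inl i)) +
        ((M.map Prod.snd).toFinsupp).mapDomain (fun j : Fin m => Sum.inl (Sum.inr j))) 1 := by
  rw [map_multiset_prod, Multiset.map_map]
  rw [show (⇑(psi n m) ∘ fun p : Fin n × Fin m => X (Sum.inl p)) =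
      fun p : Fin n × Fin m =>
        (X (Sum.inl (Sum.inl p.1)) * X (Sum.inl (Sum.inr p.2)) :
          MvPolynomial (TQVars n m) ℂ) from by funext p; simp [psi]]
  rw [Multiset.prod_map_mul]
  have h2 : (M.map fun p : Fin n × Fin m =>
      (X (Sum.inl (Sum.inl p.1)) : MvPolynomial (TQVars n m) ℂ)) =
      (M.map Prod.fst).map fun i => (X (Sum.inl (Sum.inl i)) : MvPolynomial (TQVars n m) ℂ) := by
    rw [Multiset.map_map]; rfl
  have h3 : (M.map fun p : Fin n × Fin m =>
      (X (Sum.inl (Sum.inr p.2)) : MvPolynomial (TQVars n m) ℂ)) =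
      (M.map Prod.snd).map fun j => (X (Sum.inl (Sum.inr j)) : MvPolynomial (TQVars n m) ℂ) := by
    rw [Multiset.map_map]; rfl
  rw [h2, h3, prod_X_multiset, prod_X_multiset, monomial_mul, one_mul]

lemma psi_PT (n m : ℕ) (M : Multiset (Fin m × Fin n)) :
    psi n m ((M.map fun p => X (Sum.inr p)).prod) =
      monomial (((M.map Prod.fst).toFinsupp).mapDomain (fun k : Fin m => Sum.inr (Sum.inl k)) +
        ((M.map Prod.snd).toFinsupp).mapDomain (fun l : Fin n => Sum.inr (Sum.inr l))) 1 := by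
  rw [map_multiset_prod, Multiset.map_map]
  rw [show (⇑(psi n m) ∘ fun p : Fin m × Fin n => X (Sum.inr p)) =
      fun p : Fin m × Fin n =>
        (X (Sum.inr (Sum.inl p.1)) * X (Sum.inr (Sum.inr p.2)) :
          MvPolynomial (TQVars n m) ℂ) from by funext p; simp [psi]]
  rw [Multiset.prod_map_mul]
  have h2 : (M.map fun p : Fin m × Fin n =>
      (X (Sum.inr (Sum.inl p.1)) : MvPolynomial (TQVars n m) ℂ)) =
      (M.map Prod.fst).map fun k => (X (Sum.inr (Sum.inl k)) : MvPolynomial (TQVars n m) ℂ) := by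
    rw [Multiset.map_map]; rfl
  have h3 : (M.map fun p : Fin m × Fin n =>
      (X (Sum.inr (Sum.inr p.2)) : MvPolynomial (TQVars n m) ℂ)) =
      (M.map Prod.snd).map fun l => (X (Sum.inr (Sum.inr l)) : MvPolynomial (TQVars n m) ℂ) := by
    rw [Multiset.map_map]; rfl
  rw [h2, h3, prod_X_multiset, prod_X_multiset, monomial_mul, one_mul]

/-- the two restrictions of `d : SVars n m →₀ ℕ` -/
noncomputable def dS (d : SVars n m →₀ ℕ) : Fin n × Fin m →₀ ℕ :=
  d.comapDomain Sum.inl Sum.inl_injective.injOn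

noncomputable def dT (d : SVars n m →₀ ℕ) : Fin m × Fin n →₀ ℕ :=
  d.comapDomain Sum.inr Sum.inr_injective.injOn

lemma monomial_split (d : SVars n m →₀ ℕ) :
    (monomial d 1 : MvPolynomial (SVars n m) ℂ) =
      (((dS d).toMultiset.map fun p => X (Sum.inl p)).prod) *
      (((dT d).toMultiset.map fun p => X (Sum.inr p)).prod) := by
  have hd : d = Finsupp.mapDomain Sum.inl (dS d) + Finsupp.mapDomain Sum.inr (dT d) := by
    ext v
    rcases v with p | p
    · rw [Finsupp.add_apply, Finsupp.mapDomain_apply Sum.inl_injective,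
        Finsupp.mapDomain_notin_range _ _ (by simp)]
      simp [dS, Finsupp.comapDomain_apply]
    · rw [Finsupp.add_apply, Finsupp.mapDomain_apply Sum.inr_injective,
        Finsupp.mapDomain_notin_range _ _ (by simp)]
      simp [dT, Finsupp.comapDomain_apply]
  rw [prod_X_comp, prod_X_comp, monomial_mul, one_mul, ← hd]

noncomputable def Af (d : SVars n m →₀ ℕ) : Fin n →₀ ℕ := (((dS d).toMultiset.map Prod.fst)).toFinsupp
noncomputable def Bf (d : SVars n m →₀ ℕ) : Fin m →₀ ℕ := (((dS d).toMultiset.map Prod.snd)).toFinsupp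
noncomputable def Cf (d : SVars n m →₀ ℕ) : Fin m →₀ ℕ := (((dT d).toMultiset.map Prod.fst)).toFinsupp
noncomputable def Df (d : SVars n m →₀ ℕ) : Fin n →₀ ℕ := (((dT d).toMultiset.map Prod.snd)).toFinsupp

noncomputable def F (d : SVars n m →₀ ℕ) : TQVars n m →₀ ℕ := encode (Af d) (Bf d) (Cf d) (Df d)

lemma key1 (n m : ℕ) (d : SVars n m →₀ ℕ) :
    (monomial d 1 : MvPolynomial (SVars n m) ℂ) - canonMono (Af d) (Bf d) (Cf d) (Df d) ∈
      Ideal.span (segreRelations n m) := by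
  have hrelS : ∀ (i₁ i₂ : Fin n) (j₁ j₂ : Fin m),
      (fun p : Fin n × Fin m => (X (Sum.inl p) : MvPolynomial (SVars n m) ℂ)) (i₁, j₁) *
        (fun p : Fin n × Fin m => (X (Sum.inl p) : MvPolynomial (SVars n m) ℂ)) (i₂, j₂) -
        (fun p : Fin n × Fin m => (X (Sum.inl p) : MvPolynomial (SVars n m) ℂ)) (i₁, j₂) *
        (fun p : Fin n × Fin m => (X (Sum.inl p) : MvPolynomial (SVars n m) ℂ)) (i₂, j₁) ∈
        Ideal.span (segreRelations n m) :=
    fun i₁ i₂ j₁ j₂ => Ideal.subset_span (Or.inl ⟨i₁, i₂, j₁, j₂, rfl⟩)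
  have hrelT : ∀ (k₁ k₂ : Fin m) (l₁ l₂ : Fin n),
      (fun p : Fin m × Fin n => (X (Sum.inr p) : MvPolynomial (SVars n m) ℂ)) (k₁, l₁) *
        (fun p : Fin m × Fin n => (X (Sum.inr p) : MvPolynomial (SVars n m) ℂ)) (k₂, l₂) -
        (fun p : Fin m × Fin n => (X (Sum.inr p) : MvPolynomial (SVars n m) ℂ)) (k₁, l₂) *
        (fun p : Fin m × Fin n => (X (Sum.inr p) : MvPolynomial (SVars n m) ℂ)) (k₂, l₁) ∈
        Ideal.span (segreRelations n m) :=
    fun k₁ k₂ l₁ l₂ => Ideal.subset_span (Or.inr ⟨k₁, k₂, l₁, l₂, rfl⟩)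
  have hcardS : Multiset.card (Af d).toMultiset = Multiset.card (Bf d).toMultiset := by
    rw [Af, Bf, Multiset.toFinsupp_toMultiset, Multiset.toFinsupp_toMultiset,
      Multiset.card_map, Multiset.card_map]
  have hcardT : Multiset.card (Cf d).toMultiset = Multiset.card (Df d).toMultiset := by
    rw [Cf, Df, Multiset.toFinsupp_toMultiset, Multiset.toFinsupp_toMultiset,
      Multiset.card_map, Multiset.card_map]
  have hS := segre_swap_lemma (Ideal.span (segreRelations n m))
    (fun p : Fin n × Fin m => (X (Sum.inl p) : MvPolynomial (SVars n m) ℂ)) hrelS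
    (dS d).toMultiset (canonPair (Af d) (Bf d))
    (by rw [canonPair_fst _ _ hcardS, Af, Multiset.toFinsupp_toMultiset])
    (by rw [canonPair_snd _ _ hcardS, Bf, Multiset.toFinsupp_toMultiset])
  have hT := segre_swap_lemma (Ideal.span (segreRelations n m))
    (fun p : Fin m × Fin n => (X (Sum.inr p) : MvPolynomial (SVars n m) ℂ)) hrelT
    (dT d).toMultiset (canonPair (Cf d) (Df d))
    (by rw [canonPair_fst _ _ hcardT, Cf, Multiset.toFinsupp_toMultiset])
    (by rw [canonPair_snd _ _ hcardT, Df, Multiset.toFinsupp_toMultiset])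
  rw [monomial_split, canonMono]
  set P1 := (((dS d).toMultiset).map fun p =>
    (X (Sum.inl p) : MvPolynomial (SVars n m) ℂ)).prod
  set P2 := (((dT d).toMultiset).map fun p =>
    (X (Sum.inr p) : MvPolynomial (SVars n m) ℂ)).prod
  set Q1 := ((canonPair (Af d) (Bf d)).map fun p =>
    (X (Sum.inl p) : MvPolynomial (SVars n m) ℂ)).prod
  set Q2 := ((canonPair (Cf d) (Df d)).map fun p =>
    (X (Sum.inr p) : MvPolynomial (SVars n m) ℂ)).prod
  have heq : P1 * P2 - Q1 * Q2 = (P1 - Q1) * P2 + Q1 * (P2 - Q2) := by ring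
  rw [heq]
  exact Ideal.add_mem _ (Ideal.mul_mem_right _ _ hS) (Ideal.mul_mem_left _ _ hT)

lemma psi_canonMono (n m : ℕ) (α : Fin n →₀ ℕ) (β : Fin m →₀ ℕ) (γ : Fin m →₀ ℕ)
    (δ : Fin n →₀ ℕ) (hab : Multiset.card α.toMultiset = Multiset.card β.toMultiset)
    (hcd : Multiset.card γ.toMultiset = Multiset.card δ.toMultiset) :
    psi n m (canonMono α β γ δ) = monomial (encode α β γ δ) 1 := by
  rw [canonMono, map_mul, psi_PS, psi_PT, canonPair_fst _ _ hab, canonPair_snd _ _ hab,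
    canonPair_fst _ _ hcd, canonPair_snd _ _ hcd, Finsupp.toMultiset_toFinsupp,
    Finsupp.toMultiset_toFinsupp, Finsupp.toMultiset_toFinsupp, Finsupp.toMultiset_toFinsupp,
    monomial_mul, one_mul, encode]
  congr 1
  abel

lemma key2 (n m : ℕ) (d : SVars n m →₀ ℕ) :
    psi n m (monomial d 1) = monomial (F d) 1 := by
  rw [monomial_split, map_mul, psi_PS, psi_PT, monomial_mul, one_mul, F, encode,
    Af, Bf, Cf, Df]
  congr 1
  abel

lemma range_psi (n m : ℕ) : (psi n m).range = Algebra.adjoin ℂ (segreProducts n m) := by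
  have hset : segreProducts n m = Set.range (Sum.elim
      (fun p : Fin n × Fin m =>
        (X (Sum.inl (Sum.inl p.1)) * X (Sum.inl (Sum.inr p.2)) : MvPolynomial (TQVars n m) ℂ))
      (fun p : Fin m × Fin n =>
        X (Sum.inr (Sum.inl p.1)) * X (Sum.inr (Sum.inr p.2)))) := by
    ext p
    constructor
    · rintro (⟨i, j, rfl⟩ | ⟨k, l, rfl⟩)
      · exact ⟨Sum.inl (i, j), rfl⟩
      · exact ⟨Sum.inr (k, l), rfl⟩
    · rintro ⟨(q | q), rfl⟩
      · exact Or.inl ⟨q.1, q.2, rfl⟩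
      · exact Or.inr ⟨q.1, q.2, rfl⟩
  rw [hset]
  exact (Algebra.adjoin_range_eq_range_aeval ℂ _).symm

lemma psi_f_expand (n m : ℕ) (f : MvPolynomial (SVars n m) ℂ) :
    psi n m f = ∑ d ∈ f.support, coeff d f • monomial (F d) 1 := by
  conv_lhs => rw [f.as_sum]
  rw [map_sum]
  refine Finset.sum_congr rfl fun d _ => ?_
  rw [show (monomial d (coeff d f) : MvPolynomial (SVars n m) ℂ)
      = coeff d f • monomial d 1 from by rw [smul_monomial, smul_eq_mul, mul_one],
    map_smul, key2]

lemma fiber_coeff_sum (n m : ℕ) (f : MvPolynomial (SVars n m) ℂ) (hf : psi n m f = 0)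
    (e : TQVars n m →₀ ℕ) :
    ∑ d ∈ f.support.filter (fun d => F d = e), coeff d f = 0 := by
  classical
  have h := psi_f_expand n m f
  rw [hf] at h
  have hc := congrArg (coeff e) h.symm
  rw [MvPolynomial.coeff_sum] at hc
  simp only [MvPolynomial.coeff_smul, coeff_monomial, coeff_zero] at hc
  rw [Finset.sum_filter]
  refine Eq.trans (Finset.sum_congr rfl fun d _ => ?_) hc
  by_cases hde : F d = e <;> simp [hde]

lemma ker_psi (n m : ℕ) : RingHom.ker (psi n m) = Ideal.span (segreRelations n m) := by
  classical
  apply le_antisymm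
  · intro f hf
    rw [RingHom.mem_ker] at hf
    rw [← Ideal.Quotient.eq_zero_iff_mem, ← Ideal.Quotient.mkₐ_eq_mk ℂ]
    set I := Ideal.span (segreRelations n m)
    set π := Ideal.Quotient.mkₐ ℂ I with hπ
    have hcanon : ∀ d : SVars n m →₀ ℕ,
        π (monomial d 1) = π (canonMono (Af d) (Bf d) (Cf d) (Df d)) := by
      intro d
      exact Ideal.Quotient.eq.2 (key1 n m d)
    have hfib : ∀ d d' : SVars n m →₀ ℕ, F d = F d' →
        π (monomial d 1) = π (monomial d' 1) := by
      intro d d' h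
      obtain ⟨h1, h2, h3, h4⟩ := encode_injective _ _ _ _ _ _ _ _ h
      rw [hcanon d, hcanon d', h1, h2, h3, h4]
    have hexp : π f = ∑ d ∈ f.support, coeff d f • π (monomial d 1) := by
      conv_lhs => rw [f.as_sum]
      rw [map_sum]
      refine Finset.sum_congr rfl fun d _ => ?_
      rw [show (monomial d (coeff d f) : MvPolynomial (SVars n m) ℂ)
        = coeff d f • monomial d 1 from by rw [smul_monomial, smul_eq_mul, mul_one], map_smul]
    rw [hexp, ← Finset.sum_fiberwise_of_maps_to
      (fun d (hd : d ∈ f.support) => Finset.mem_image_of_mem F hd)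
      (fun d => coeff d f • π (monomial d 1))]
    refine Finset.sum_eq_zero fun e he => ?_
    obtain ⟨d₀, _, hd₀⟩ := Finset.mem_image.1 he
    have hconst : ∀ d ∈ f.support.filter (fun d => F d = e),
        coeff d f • π (monomial d 1) = coeff d f • π (monomial d₀ 1) := by
      intro d hd
      obtain ⟨-, hde⟩ := Finset.mem_filter.1 hd
      rw [hfib d d₀ (by rw [hde, hd₀])]
    rw [Finset.sum_congr rfl hconst, ← Finset.sum_smul, fiber_coeff_sum n m f hf e, zero_smul]
  · rw [Ideal.span_le]
    rintro p hp
    rcases hp with ⟨i₁, i₂, j₁, j₂, rfl⟩ | ⟨k₁, k₂, l₁, l₂, rfl⟩ <;>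
      · simp only [SetLike.mem_coe, RingHom.mem_ker, map_sub, map_mul, psi, aeval_X,
          Sum.elim_inl, Sum.elim_inr]
        ring

/-- evaluating the variable-scaled polynomial -/
lemma eval_scale {σ : Type*} (g φ : σ → ℂ) (f : MvPolynomial σ ℂ) :
    eval φ (aeval (fun v => C (g v) * X v) f) = eval (fun v => g v * φ v) f := by
  induction f using MvPolynomial.induction_on with
  | C a => simp
  | add p q hp hq => simp only [map_add]; rw [hp, hq]
  | mul_X p s hp =>
    simp only [map_mul, aeval_X, eval_mul, eval_C, eval_X]
    rw [hp]

lemma scale_monomial {σ : Type*} (g : σ → ℂ) (d : σ →₀ ℕ) (c : ℂ) :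
    aeval (fun v => C (g v) * X v) (monomial d c)
      = monomial d (c * d.prod fun v k => g v ^ k) := by
  rw [aeval_monomial, monomial_eq]
  rw [show algebraMap ℂ (MvPolynomial σ ℂ) c = C c from rfl]
  rw [Finsupp.prod, Finsupp.prod, Finsupp.prod]
  simp only [mul_pow]
  rw [Finset.prod_mul_distrib]
  have h1 : ∏ v ∈ d.support, (C (g v) : MvPolynomial σ ℂ) ^ d v
      = C (∏ v ∈ d.support, g v ^ d v) := by
    rw [map_prod]
    simp [map_pow]
  rw [h1, map_mul]
  ring

lemma coeff_scale {σ : Type*} (g : σ → ℂ) (f : MvPolynomial σ ℂ) (d : σ →₀ ℕ) :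
    coeff d (aeval (fun v => C (g v) * X v) f)
      = (d.prod fun v k => g v ^ k) * coeff d f := by
  classical
  conv_lhs => rw [f.as_sum]
  rw [map_sum, MvPolynomial.coeff_sum]
  simp only [scale_monomial, coeff_monomial]
  rw [Finset.sum_ite_eq' f.support d (fun d' => coeff d' f * d'.prod fun v k => g v ^ k)]
  by_cases hd : d ∈ f.support
  · rw [if_pos hd]; ring
  · rw [if_neg hd, MvPolynomial.notMem_support_iff.1 hd]; ring

/-- a semi-invariant's exponents all satisfy the weight identity -/
lemma semiInv_monomial_scale {n m : ℕ} {η : ℕ} {f : MvPolynomial (TQVars n m) ℂ}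
    (hf : f ∈ SemiInvTQ n m η) (t₁ t₂ t₃ t₄ : ℂˣ) {d : TQVars n m →₀ ℕ}
    (hd : d ∈ f.support) :
    (d.prod fun v k => torusScale n m t₁ t₂ t₃ t₄ v ^ k) = ((t₄ : ℂ) * (t₁ : ℂ)⁻¹) ^ η := by
  set g := torusScale n m t₁ t₂ t₃ t₄ with hg
  have hpoly : aeval (fun v => C (g v) * X v) f = C (((t₄ : ℂ) * (t₁ : ℂ)⁻¹) ^ η) * f := by
    apply MvPolynomial.funext
    intro φ
    rw [eval_scale, hf t₁ t₂ t₃ t₄ φ, map_mul, eval_C]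
  have hc := congrArg (coeff d) hpoly
  rw [coeff_scale, MvPolynomial.coeff_C_mul] at hc
  have hne : coeff d f ≠ 0 := MvPolynomial.mem_support_iff.1 hd
  exact mul_right_cancel₀ hne hc

lemma balance1 {n m η : ℕ} {f : MvPolynomial (TQVars n m) ℂ} (hf : f ∈ SemiInvTQ n m η)
    {d : TQVars n m →₀ ℕ} (hd : d ∈ f.support) :
    ((eX d).sum fun _ k => k) = ((eY d).sum fun _ k => k) := by
  set u : ℂˣ := ⟨(2 : ℂ), (2 : ℂ)⁻¹, by norm_num, by norm_num⟩ with hu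
  have h1 := semiInv_monomial_scale hf 1 u 1 1 hd
  rw [eq_encode' d, prod_encode] at h1
  simp only [torusScale, Units.val_one, inv_one, mul_one, one_mul, one_pow] at h1
  have hone : ∀ (σ : Type) (e : σ →₀ ℕ), (e.prod fun _ _ => (1 : ℂ)) = 1 := by
    intro σ e; rw [Finsupp.prod]; exact Finset.prod_const_one
  rw [hone _ (eW d), hone _ (eZ d), mul_one, mul_one, prod_const_pow, prod_const_pow] at h1
  exact two_pow_balance h1

lemma balance2 {n m η : ℕ} {f : MvPolynomial (TQVars n m) ℂ} (hf : f ∈ SemiInvTQ n m η)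
    {d : TQVars n m →₀ ℕ} (hd : d ∈ f.support) :
    ((eW d).sum fun _ k => k) = ((eZ d).sum fun _ k => k) := by
  set u : ℂˣ := ⟨(2 : ℂ), (2 : ℂ)⁻¹, by norm_num, by norm_num⟩ with hu
  have h1 := semiInv_monomial_scale hf 1 1 u 1 hd
  rw [eq_encode' d, prod_encode] at h1
  simp only [torusScale, Units.val_one, inv_one, mul_one, one_mul, one_pow] at h1
  have hone : ∀ (σ : Type) (e : σ →₀ ℕ), (e.prod fun _ _ => (1 : ℂ)) = 1 := by
    intro σ e; rw [Finsupp.prod]; exact Finset.prod_const_one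
  rw [hone _ (eX d), hone _ (eY d), one_mul, one_mul, prod_const_pow, prod_const_pow] at h1
  exact two_pow_balance h1

lemma balanced_mem {n m : ℕ} (e : TQVars n m →₀ ℕ)
    (hab : ((eX e).sum fun _ k => k) = ((eY e).sum fun _ k => k))
    (hcd : ((eW e).sum fun _ k => k) = ((eZ e).sum fun _ k => k)) :
    (monomial e 1 : MvPolynomial (TQVars n m) ℂ) ∈ Algebra.adjoin ℂ (segreProducts n m) := by
  have hcard1 : Multiset.card (eX e).toMultiset = Multiset.card (eY e).toMultiset := by
    rw [Finsupp.card_toMultiset, Finsupp.card_toMultiset]; exact hab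
  have hcard2 : Multiset.card (eW e).toMultiset = Multiset.card (eZ e).toMultiset := by
    rw [Finsupp.card_toMultiset, Finsupp.card_toMultiset]; exact hcd
  have hpsi := psi_canonMono n m (eX e) (eY e) (eW e) (eZ e) hcard1 hcard2
  rw [← range_psi n m]
  exact ⟨canonMono (eX e) (eY e) (eW e) (eZ e), by
    show psi n m (canonMono (eX e) (eY e) (eW e) (eZ e)) = monomial e 1
    rw [hpsi, ← eq_encode' e]⟩

lemma semiInv_le (n m η : ℕ) :
    SemiInvTQ n m η ≤ Subalgebra.toSubmodule (Algebra.adjoin ℂ (segreProducts n m)) := by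
  intro f hf
  rw [Subalgebra.mem_toSubmodule, f.as_sum]
  apply Subalgebra.sum_mem
  intro d hd
  rw [show (monomial d (coeff d f) : MvPolynomial (TQVars n m) ℂ)
      = coeff d f • monomial d 1 from by rw [smul_monomial, smul_eq_mul, mul_one]]
  exact Subalgebra.smul_mem _ (balanced_mem d (balance1 hf hd) (balance2 hf hd)) _

lemma semiInv_mul {n m η₁ η₂ : ℕ} {f g : MvPolynomial (TQVars n m) ℂ}
    (hf : f ∈ SemiInvTQ n m η₁) (hg : g ∈ SemiInvTQ n m η₂) :
    f * g ∈ SemiInvTQ n m (η₁ + η₂) := by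
  intro t₁ t₂ t₃ t₄ φ
  rw [map_mul, map_mul, hf t₁ t₂ t₃ t₄ φ, hg t₁ t₂ t₃ t₄ φ, pow_add]
  ring

lemma semiInv_one (n m : ℕ) : (1 : MvPolynomial (TQVars n m) ℂ) ∈ SemiInvTQ n m 0 := by
  intro t₁ t₂ t₃ t₄ φ
  simp

lemma semiInv_gen {n m : ℕ} {p : MvPolynomial (TQVars n m) ℂ} (hp : p ∈ segreProducts n m) :
    p ∈ SemiInvTQ n m 1 := by
  rcases hp with ⟨i, j, rfl⟩ | ⟨k, l, rfl⟩ <;>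
  · intro t₁ t₂ t₃ t₄ φ
    simp only [map_mul, eval_X, torusScale, pow_one]
    have h1 := t₁.ne_zero
    have h2 := t₂.ne_zero
    have h3 := t₃.ne_zero
    have h4 := t₄.ne_zero
    field_simp

lemma sup_mul_closed (n m : ℕ) :
    ∀ x y : MvPolynomial (TQVars n m) ℂ, x ∈ (⨆ η : ℕ, SemiInvTQ n m η) →
      y ∈ (⨆ η : ℕ, SemiInvTQ n m η) → x * y ∈ (⨆ η : ℕ, SemiInvTQ n m η) := by
  intro x y hx hy
  refine Submodule.iSup_induction (motive := fun x => x * y ∈ (⨆ η : ℕ, SemiInvTQ n m η))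
    (fun η => SemiInvTQ n m η) hx ?_ (by simp) ?_
  · intro η₁ x' hx'
    refine Submodule.iSup_induction (motive := fun y => x' * y ∈ (⨆ η : ℕ, SemiInvTQ n m η))
      (fun η => SemiInvTQ n m η) hy ?_ (by simp) ?_
    · intro η₂ y' hy'
      exact Submodule.mem_iSup_of_mem (η₁ + η₂) (semiInv_mul hx' hy')
    · intro a b ha hb
      rw [mul_add]
      exact Submodule.add_mem _ ha hb
  · intro a b ha hb
    rw [add_mul]
    exact Submodule.add_mem _ ha hb

end SegreAux

/-- For `Q = Q_n ⊗ Q_m` with dimension vector `(1,1,1,1)` and `θ = (−1,0,0,1)`: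
the ring of semi-invariants `⊕_η O^{χ_θ^η}` is the subring `ℂ[x_i y_j, w_k z_l]`,
and the latter is isomorphic to `ℂ[s_{ij}, t_{kl}]` modulo the ideal generated by
the `2×2` Segre relations. -/
theorem semiInvariants_segre (n m : ℕ) :
    Subalgebra.toSubmodule (Algebra.adjoin ℂ (segreProducts n m)) =
        (⨆ η : ℕ, SemiInvTQ n m η) ∧
      Nonempty
        ((MvPolynomial ((Fin n × Fin m) ⊕ (Fin m × Fin n)) ℂ ⧸
            Ideal.span (segreRelations n m)) ≃ₐ[ℂ]
          Algebra.adjoin ℂ (segreProducts n m)) := by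
  constructor
  · apply le_antisymm
    · intro x hx
      rw [Subalgebra.mem_toSubmodule] at hx
      have hS : Algebra.adjoin ℂ (segreProducts n m) ≤
          Submodule.toSubalgebra (⨆ η : ℕ, SemiInvTQ n m η)
            (Submodule.mem_iSup_of_mem 0 (SegreAux.semiInv_one n m))
            (SegreAux.sup_mul_closed n m) := by
        apply Algebra.adjoin_le
        intro p hp
        exact Submodule.mem_toSubalgebra.2 (Submodule.mem_iSup_of_mem 1 (SegreAux.semiInv_gen hp))
      exact Submodule.mem_toSubalgebra.1 (hS hx)
    · exact iSup_le fun η => SegreAux.semiInv_le n m η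
  · exact ⟨(Ideal.quotientEquivAlgOfEq ℂ (SegreAux.ker_psi n m).symm).trans
      ((Ideal.quotientKerEquivRange (SegreAux.psi n m)).trans
        (Subalgebra.equivOfEq _ _ (SegreAux.range_psi n m)))⟩
end

section
/- Let G be a finite group acting on a commutative ring A by ring automorphisms, and let S ⊆ A^G be a multiplicative subset of invariant elements. Then the localization of the invariant ring at S is isomorphic to the invariants of the localization: (A^G)_S ≅ (A_S)^G. -/
/-- The subring of `G`-fixed elements of `A`. -/
def fixedSubring (G A : Type) [Monoid G] [CommRing A] [MulSemiringAction G A] :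
    Subring A where
  carrier := { a | ∀ g : G, g • a = a }
  one_mem' := fun g => smul_one g
  mul_mem' := fun {a b} ha hb g => by rw [smul_mul', ha g, hb g]
  add_mem' := fun {a b} ha hb g => by rw [smul_add, ha g, hb g]
  zero_mem' := fun g => smul_zero g
  neg_mem' := fun {a} ha g => by rw [smul_neg, ha g]

/-- The subring of `G`-fixed elements of the localization `A_S`, for the induced
action `a/s ↦ g(a)/s` (each `g` acts via `IsLocalization.map`, using that the
elements of `S` are invariant). -/
noncomputable def locFixedSubring (G A : Type) [Monoid G] [CommRing A]
    [MulSemiringAction G A] (S : Submonoid A)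
    (hS : ∀ s ∈ S, ∀ g : G, g • s = s) : Subring (Localization S) where
  carrier := { x | ∀ g : G,
    IsLocalization.map (M := S) (T := S) (Localization S)
      (MulSemiringAction.toRingHom G A g)
      (fun s hs => show MulSemiringAction.toRingHom G A g s ∈ S from by
        rw [show MulSemiringAction.toRingHom G A g s = g • s from rfl, hS s hs g]
        exact hs) x = x }
  one_mem' := fun g => by simp
  mul_mem' := fun {a b} ha hb g => by rw [map_mul, ha g, hb g]
  add_mem' := fun {a b} ha hb g => by rw [map_add, ha g, hb g]
  zero_mem' := fun g => by simp
  neg_mem' := fun {a} ha g => by rw [map_neg, ha g]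

/-- Let `G` be a finite group acting on a commutative ring `A` by ring automorphisms
and let `S` be a multiplicative subset consisting of `G`-invariant elements. Then the
localization of the invariant ring `A^G` at `S` is isomorphic to the invariants of
the localization: `(A^G)_S ≅ (A_S)^G`. -/
theorem localization_fixed_comm (G A : Type) [Group G] [Fintype G] [CommRing A]
    [MulSemiringAction G A] (S : Submonoid A)
    (hS : ∀ s ∈ S, ∀ g : G, g • s = s) :
    Nonempty
      (Localization (S.comap (fixedSubring G A).subtype.toMonoidHom) ≃+*
        locFixedSubring G A S hS) := by

  classical
  set R := fixedSubring G A
  set S' := S.comap R.subtype.toMonoidHom with hS'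
  set L := locFixedSubring G A S hS with hL
  -- the various maps
  have hy : ∀ g : G, ∀ s ∈ S, MulSemiringAction.toRingHom G A g s ∈ S := by
    intro g s hs
    rw [show MulSemiringAction.toRingHom G A g s = g • s from rfl, hS s hs g]
    exact hs
  set φ : G → Localization S →+* Localization S := fun g =>
    IsLocalization.map (M := S) (T := S) (Localization S)
      (MulSemiringAction.toRingHom G A g) (fun s hs => hy g s hs) with hφ
  have memL : ∀ x : Localization S, x ∈ L ↔ ∀ g : G, φ g x = x := fun x => Iff.rfl
  have φalg : ∀ (g : G) (a : A),
      φ g (algebraMap A (Localization S) a) = algebraMap A (Localization S) (g • a) := by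
    intro g a
    exact IsLocalization.map_eq _ a
  -- the candidate localization map
  have hmem : ∀ r : R, algebraMap A (Localization S) (r : A) ∈ L := by
    intro r
    rw [memL]
    intro g
    rw [φalg, r.2 g]
  set f : R →+* L :=
    ((algebraMap A (Localization S)).comp R.subtype).codRestrict L.toSubsemiring
      (fun r => hmem r) with hf
  letI : Algebra R L := f.toAlgebra
  have falg : ∀ r : R, ((algebraMap R L r : L) : Localization S)
      = algebraMap A (Localization S) (r : A) := fun r => rfl
  haveI : IsLocalization S' L := by
    constructor
    constructor
    · -- map_units
      rintro ⟨⟨s, hsfix⟩, hsS⟩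
      have hsS : s ∈ S := hsS
      obtain ⟨u, hu⟩ := IsLocalization.map_units (Localization S) ⟨s, hsS⟩
      have huL : (u : Localization S) ∈ L := by
        rw [hu]; exact hmem ⟨s, hsfix⟩
      have huinvL : ((u⁻¹ : (Localization S)ˣ) : Localization S) ∈ L := by
        rw [memL]
        intro g
        have h1 : φ g ((u⁻¹ : (Localization S)ˣ) : Localization S) * (u : Localization S) = 1 := by
          conv_lhs => rw [← ((memL _).mp huL g)]
          rw [← map_mul, Units.inv_mul, map_one]
        calc φ g ((u⁻¹ : (Localization S)ˣ) : Localization S)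
            = φ g ((u⁻¹ : (Localization S)ˣ) : Localization S) * ((u : Localization S)
              * ((u⁻¹ : (Localization S)ˣ) : Localization S)) := by
              rw [Units.mul_inv, mul_one]
          _ = ((u⁻¹ : (Localization S)ˣ) : Localization S) := by
              rw [← mul_assoc, h1, one_mul]
      refine isUnit_iff_exists.mpr ⟨⟨((u⁻¹ : (Localization S)ˣ) : Localization S), huinvL⟩, ?_, ?_⟩
      · apply Subtype.ext
        show (algebraMap A (Localization S) s) * _ = 1
        rw [← hu, Units.mul_inv]
      · apply Subtype.ext
        show _ * (algebraMap A (Localization S) s) = 1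
        rw [← hu, Units.inv_mul]
    · -- surj
      rintro ⟨z, hz⟩
      obtain ⟨⟨a, s⟩, hsurj⟩ := IsLocalization.surj (M := S) z
      -- for each g, algebraMap (g • a) = algebraMap a
      have key : ∀ g : G, algebraMap A (Localization S) (g • a)
          = algebraMap A (Localization S) a := by
        intro g
        have h1 : z * algebraMap A (Localization S) (s : A)
            = φ g (algebraMap A (Localization S) a) := by
          have := congrArg (φ g) hsurj
          rw [map_mul, (memL z).mp hz g] at this
          rw [← this, φalg, hS s s.2 g]
        rw [hsurj, φalg] at h1
        exact h1.symm
      have hc : ∀ g : G, ∃ c : S, (c : A) * (g • a) = (c : A) * a := by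
        intro g
        exact (IsLocalization.eq_iff_exists S _).mp (key g)
      choose cg hcg using hc
      set c : A := ∏ g : G, (cg g : A) with hcdef
      have hcS : c ∈ S := S.prod_mem (fun g _ => (cg g).2)
      have hcfix : ∀ g : G, g • c = c := hS c hcS
      have hca : ∀ g : G, c * (g • a) = c * a := by
        intro g
        rw [hcdef, ← Finset.mul_prod_erase Finset.univ _ (Finset.mem_univ g)]
        rw [mul_comm ((cg g : A)) _, mul_assoc, mul_assoc, hcg g]
      have hbfix : ∀ g : G, g • (c * a) = c * a := by
        intro g
        rw [smul_mul', hcfix g, hca g]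
      have hcsS : c * (s : A) ∈ S := S.mul_mem hcS s.2
      have hcsfix : ∀ g : G, g • (c * (s : A)) = c * (s : A) := hS _ hcsS
      refine ⟨⟨⟨c * a, hbfix⟩, ⟨⟨c * (s : A), hcsfix⟩, hcsS⟩⟩, ?_⟩
      apply Subtype.ext
      show z * algebraMap A (Localization S) (c * (s : A))
        = algebraMap A (Localization S) (c * a)
      rw [map_mul, map_mul, ← mul_assoc, mul_comm z, mul_assoc, hsurj]
    · -- exists_of_eq
      intro r r' h
      have h' : algebraMap A (Localization S) (r : A) = algebraMap A (Localization S) (r' : A) := by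
        have := congrArg (Subtype.val : L → Localization S) h
        rwa [falg, falg] at this
      obtain ⟨c, hc⟩ := (IsLocalization.eq_iff_exists S _).mp h'
      refine ⟨⟨⟨(c : A), hS c c.2⟩, c.2⟩, ?_⟩
      apply Subtype.ext
      exact hc
  exact ⟨(IsLocalization.algEquiv S' (Localization S') L).toRingEquiv⟩
end
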